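/- arXiv:1703.01640 — 12 statements merged into one kernel-verified Lean document; each statement's English description precedes it below -/
import Mathlib

section
/- Let γ be a closed rectifiable curve in ℝ² of length L, and let ρ > 0. Then the Lebesgue measure (area) of the set of points of ℝ² at distance at most ρ from the image of γ is at most 2ρL + πρ². -/
/-!
Sample the curve once in each arc-length window `[kε, (k+1)ε)`: this gives points
`c₀, …, cₙ` whose consecutive distances add up to at most `L` and which are `ε`-dense in the
curve, so the `ρ`-neighbourhood is covered by the disks of radius `r = ρ + 2ε` around them.
Adding these disks one at a time, the `k`-th new disk contributes at most the lune
`B(c_{k+1}, r) \ B(c_k, r)`; every line parallel to `c_k c_{k+1}` meets the lune in length at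
most `|c_k c_{k+1}|`, and only lines at distance `≤ r` from the centres meet it, so its area is at
most `2r |c_k c_{k+1}|`. The union therefore has area at most `πr² + 2rL`; let `ε → 0`.
-/

open Set Metric MeasureTheory Real Filter Topology

theorem MeasureTheory.measure_biUnion_le_add_sum_diff {α : Type*} [MeasurableSpace α]
    (μ : Measure α) (s : ℕ → Set α) (n : ℕ) :
    μ (⋃ k ≤ n, s k) ≤ μ (s 0) + ∑ k ∈ Finset.range n, μ (s (k + 1) \ s k) := by
  induction n with
  | zero => simp
  | succ n ih =>
    have hsub : s (n + 1) \ ⋃ k ≤ n, s k ⊆ s (n + 1) \ s n :=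
      sdiff_subset_sdiff_right (subset_iUnion₂ (s := fun k (_ : k ≤ n) ↦ s k) n le_rfl)
    calc μ (⋃ k ≤ n + 1, s k)
        = μ ((⋃ k ≤ n, s k) ∪ (s (n + 1) \ ⋃ k ≤ n, s k)) := by
          rw [Set.biUnion_le_succ, union_sdiff_self]
      _ ≤ μ (⋃ k ≤ n, s k) + μ (s (n + 1) \ s n) :=
          (measure_union_le _ _).trans (by gcongr)
      _ ≤ _ := by rw [Finset.sum_range_succ, ← add_assoc]; gcongr

theorem slice_diff_disk_subset_Ioc {r d u : ℝ} (hd : 0 ≤ d) :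
    {v : ℝ | u ^ 2 + (v - d) ^ 2 ≤ r ^ 2} \ {v | u ^ 2 + v ^ 2 ≤ r ^ 2} ⊆
      Ioc √(r ^ 2 - u ^ 2) (√(r ^ 2 - u ^ 2) + d) := by
  rintro v ⟨hin, hout⟩
  simp only [mem_ofPred_eq, not_le] at hin hout
  set s := √(r ^ 2 - u ^ 2)
  have hs : s ^ 2 = r ^ 2 - u ^ 2 := sq_sqrt (by nlinarith)
  obtain ⟨hlow, hup⟩ := abs_le_of_sq_le_sq' (a := v - d) (by linarith) (sqrt_nonneg _)
  constructor <;> nlinarith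

theorem volume_disk_diff_disk_le {r d : ℝ} (hr : 0 ≤ r) (hd : 0 ≤ d) :
    volume ({p : ℝ × ℝ | p.1 ^ 2 + (p.2 - d) ^ 2 ≤ r ^ 2} \ {p | p.1 ^ 2 + p.2 ^ 2 ≤ r ^ 2}) ≤
      ENNReal.ofReal (2 * r * d) := by
  set S := {p : ℝ × ℝ | p.1 ^ 2 + (p.2 - d) ^ 2 ≤ r ^ 2} \ {p | p.1 ^ 2 + p.2 ^ 2 ≤ r ^ 2}
  have hS : MeasurableSet S := by
    apply MeasurableSet.diff <;> exact measurableSet_le (by fun_prop) (by fun_prop)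
  have hslice (u : ℝ) :
      volume (Prod.mk u ⁻¹' S) ≤ (Icc (-r) r).indicator (fun _ ↦ ENNReal.ofReal d) u := by
    by_cases hu : u ∈ Icc (-r) r
    · rw [indicator_of_mem hu]
      calc volume (Prod.mk u ⁻¹' S) ≤ volume (Ioc √(r ^ 2 - u ^ 2) (√(r ^ 2 - u ^ 2) + d)) :=
            measure_mono (slice_diff_disk_subset_Ioc hd)
        _ = ENNReal.ofReal d := by rw [volume_Ioc, add_sub_cancel_left]
    · have hempty : Prod.mk u ⁻¹' S = ∅ := eq_empty_of_forall_notMem fun v ⟨hin, _⟩ ↦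
        hu (abs_le_of_sq_le_sq' (by nlinarith [hin.out, sq_nonneg (v - d)]) hr)
      simp [hempty]
  calc volume S = ∫⁻ u, volume (Prod.mk u ⁻¹' S) := by
        rw [Measure.volume_eq_prod, Measure.prod_apply hS]
    _ ≤ ∫⁻ u, (Icc (-r) r).indicator (fun _ ↦ ENNReal.ofReal d) u := lintegral_mono hslice
    _ = ENNReal.ofReal (2 * r * d) := by
      rw [lintegral_indicator_const measurableSet_Icc, volume_Icc, ← ENNReal.ofReal_mul hd]
      ring_nf

theorem EuclideanSpace.mem_closedBall_fin_two_iff {c x : EuclideanSpace ℝ (Fin 2)} {r : ℝ}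
    (hr : 0 ≤ r) : x ∈ closedBall c r ↔ (x 0 - c 0) ^ 2 + (x 1 - c 1) ^ 2 ≤ r ^ 2 := by
  rw [mem_closedBall, EuclideanSpace.dist_eq, Fin.sum_univ_two, Real.dist_eq, Real.dist_eq,
    sq_abs, sq_abs, sqrt_le_left hr]

theorem volume_closedBall_single_diff_closedBall_zero_le {r d : ℝ} (hr : 0 ≤ r) (hd : 0 ≤ d) :
    volume (closedBall (EuclideanSpace.single 1 d) r \
        closedBall (0 : EuclideanSpace ℝ (Fin 2)) r) ≤ ENNReal.ofReal (2 * r * d) := by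
  let T : EuclideanSpace ℝ (Fin 2) ≃ᵐ ℝ × ℝ :=
    (MeasurableEquiv.toLp 2 (Fin 2 → ℝ)).symm.trans MeasurableEquiv.finTwoArrow
  have hT : MeasurePreserving T := (volume_preserving_finTwoArrow ℝ).comp
    (EuclideanSpace.volume_preserving_symm_measurableEquiv_toLp (Fin 2))
  have hpre : closedBall (EuclideanSpace.single 1 d) r \ closedBall 0 r =
      T ⁻¹' ({p : ℝ × ℝ | p.1 ^ 2 + (p.2 - d) ^ 2 ≤ r ^ 2} \ {p | p.1 ^ 2 + p.2 ^ 2 ≤ r ^ 2}) := by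
    ext x
    simp [EuclideanSpace.mem_closedBall_fin_two_iff hr, T]
  rw [hpre, hT.measure_preimage_equiv]
  exact volume_disk_diff_disk_le hr hd

theorem volume_closedBall_diff_closedBall_le (a b : EuclideanSpace ℝ (Fin 2)) {r : ℝ}
    (hr : 0 ≤ r) : volume (closedBall b r \ closedBall a r) ≤ ENNReal.ofReal (2 * r * dist a b) := by
  set d := dist a b
  have hnorm : ‖b - a‖ = ‖EuclideanSpace.single (1 : Fin 2) d‖ := by
    rw [PiLp.norm_single, norm_of_nonneg dist_nonneg, dist_comm, dist_eq_norm]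
  set e := Submodule.reflection (ℝ ∙ (b - a - EuclideanSpace.single 1 d))ᗮ
  have he : e (b - a) = EuclideanSpace.single 1 d := Submodule.reflection_sub hnorm
  let φ := fun x ↦ e (x - a)
  have hφ : MeasurePreserving φ := e.measurePreserving.comp (measurePreserving_sub_right volume a)
  have hpre : φ ⁻¹' (closedBall (EuclideanSpace.single 1 d) r \ closedBall 0 r) =
      closedBall b r \ closedBall a r := by
    ext x
    simp only [φ, mem_preimage, Set.mem_sdiff, mem_closedBall, ← he, e.dist_map, dist_sub_right,
      dist_zero_right, e.norm_map, ← dist_eq_norm]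
  rw [← hpre, hφ.measure_preimage
    (measurableSet_closedBall.diff measurableSet_closedBall).nullMeasurableSet]
  exact volume_closedBall_single_diff_closedBall_zero_le hr dist_nonneg

theorem volume_biUnion_closedBall_le (c : ℕ → EuclideanSpace ℝ (Fin 2)) {r : ℝ} (hr : 0 ≤ r)
    (n : ℕ) : volume (⋃ k ≤ n, closedBall (c k) r) ≤
      ENNReal.ofReal (π * r ^ 2 + 2 * r * ∑ k ∈ Finset.range n, dist (c k) (c (k + 1))) := by
  calc volume (⋃ k ≤ n, closedBall (c k) r)
      ≤ volume (closedBall (c 0) r) +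
          ∑ k ∈ Finset.range n, volume (closedBall (c (k + 1)) r \ closedBall (c k) r) :=
        measure_biUnion_le_add_sum_diff _ _ n
    _ ≤ ENNReal.ofReal (π * r ^ 2) +
          ∑ k ∈ Finset.range n, ENNReal.ofReal (2 * r * dist (c k) (c (k + 1))) := by
        gcongr with k
        · rw [EuclideanSpace.volume_closedBall_fin_two, ← ENNReal.ofReal_pow hr,
            ← ENNReal.ofReal_mul (by positivity), mul_comm]
        · exact volume_closedBall_diff_closedBall_le _ _ hr
    _ = _ := by
        rw [Finset.mul_sum, ENNReal.ofReal_add (by positivity) (by positivity),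
          ENNReal.ofReal_sum_of_nonneg fun k _ ↦ by positivity]

open Classical in
noncomputable def greedyNet (A : Set ℝ) (ε : ℝ) : ℕ → ℝ
  | 0 => 0
  | k + 1 =>
    if h : (A ∩ Ico (↑(k + 1) * ε) ((↑(k + 1) + 1) * ε)).Nonempty then h.some
    else greedyNet A ε k

section greedyNet

variable {A : Set ℝ} {ε : ℝ}

theorem greedyNet_mem (h0 : 0 ∈ A) (k : ℕ) : greedyNet A ε k ∈ A := by
  induction k with
  | zero => exact h0
  | succ k ih =>
    rw [greedyNet]
    split_ifs with h
    exacts [h.some_mem.1, ih]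

theorem greedyNet_lt (hε : 0 < ε) (k : ℕ) : greedyNet A ε k < (k + 1) * ε := by
  induction k with
  | zero => simpa [greedyNet] using hε
  | succ k ih =>
    rw [greedyNet]
    split_ifs with h
    · exact h.some_mem.2.2
    · push_cast at ih ⊢; linarith

theorem le_greedyNet {k : ℕ} (hk : (A ∩ Ico (k * ε) ((k + 1) * ε)).Nonempty) :
    k * ε ≤ greedyNet A ε k := by
  cases k with
  | zero => simp [greedyNet]
  | succ k => rw [greedyNet, dif_pos hk]; exact hk.some_mem.2.1

theorem greedyNet_monotone (hε : 0 < ε) : Monotone (greedyNet A ε) := by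
  refine monotone_nat_of_le_succ fun k ↦ ?_
  rw [greedyNet]
  split_ifs with h
  exacts [(greedyNet_lt hε k).le.trans (mod_cast h.some_mem.2.1), le_rfl]

theorem exists_abs_sub_greedyNet_lt {L : ℝ} (hε : 0 < ε) (hA : A ⊆ Icc 0 L) {x : ℝ} (hx : x ∈ A) :
    ∃ k ≤ ⌊L / ε⌋₊, |x - greedyNet A ε k| < ε := by
  set k := ⌊x / ε⌋₊
  have hxk : x ∈ Ico (k * ε) ((k + 1) * ε) :=
    ⟨(le_div_iff₀ hε).1 (Nat.floor_le (div_nonneg (hA hx).1 hε.le)),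
      (div_lt_iff₀ hε).1 (Nat.lt_floor_add_one _)⟩
  refine ⟨k, Nat.floor_le_floor (div_le_div_of_nonneg_right (hA hx).2 hε.le),
    abs_sub_lt_iff.2 ⟨?_, ?_⟩⟩
  · linarith [le_greedyNet ⟨x, hx, hxk⟩, hxk.2]
  · linarith [greedyNet_lt (A := A) hε k, hxk.1]

end greedyNet

theorem LocallyBoundedVariationOn.dist_le_abs_variationOnFromTo {α E : Type*} [LinearOrder α]
    [PseudoMetricSpace E] {f : α → E} {s : Set α} (hf : LocallyBoundedVariationOn f s)
    {a b : α} (ha : a ∈ s) (hb : b ∈ s) : dist (f a) (f b) ≤ |variationOnFromTo f s a b| := by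
  wlog hab : a ≤ b generalizing a b
  · rw [dist_comm, variationOnFromTo.eq_neg_swap, abs_neg]
    exact this hb ha (le_of_not_ge hab)
  rw [variationOnFromTo.eq_of_le f s hab]
  exact ((hf a b ha hb).dist_le ⟨ha, le_rfl, hab⟩ ⟨hb, hab, le_rfl⟩).trans (le_abs_self _)

theorem BoundedVariationOn.exists_chain_dist_lt {α E : Type*} [LinearOrder α]
    [PseudoMetricSpace E] {f : α → E} {s : Set α} {a : α} (hf : BoundedVariationOn f s)
    (ha : IsLeast s a) {ε : ℝ} (hε : 0 < ε) :
    ∃ (n : ℕ) (c : ℕ → E), ∑ k ∈ Finset.range n, dist (c k) (c (k + 1)) ≤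
      (eVariationOn f s).toReal ∧ ∀ t ∈ s, ∃ k ≤ n, dist (f t) (c k) < ε := by
  have hloc := hf.locallyBoundedVariationOn
  have hdist {t u : α} (ht : t ∈ s) (hu : u ∈ s) :
      dist (f t) (f u) ≤ |variationOnFromTo f s a u - variationOnFromTo f s a t| := by
    rw [variationOnFromTo.sub_right hloc ha.1 hu ht]
    exact hloc.dist_le_abs_variationOnFromTo ht hu
  set v := variationOnFromTo f s a
  set L := (eVariationOn f s).toReal
  have hrange : v '' s ⊆ Icc 0 L := by
    rintro _ ⟨t, ht, rfl⟩
    exact ⟨variationOnFromTo.nonneg_of_le f s (ha.2 ht),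
      (le_abs_self _).trans (variationOnFromTo.abs_le_eVariationOn hf)⟩
  set x := greedyNet (v '' s) ε
  have hx : ∀ k, x k ∈ v '' s := greedyNet_mem ⟨a, ha.1, variationOnFromTo.self f s a⟩
  choose t hts hvt using hx
  refine ⟨⌊L / ε⌋₊, fun k ↦ f (t k), ?_, fun u hu ↦ ?_⟩
  · calc ∑ k ∈ Finset.range ⌊L / ε⌋₊, dist (f (t k)) (f (t (k + 1)))
        ≤ ∑ k ∈ Finset.range ⌊L / ε⌋₊, (x (k + 1) - x k) := by
          refine Finset.sum_le_sum fun k _ ↦ (hdist (hts k) (hts (k + 1))).trans_eq ?_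
          rw [hvt, hvt, abs_of_nonneg (sub_nonneg.2 (greedyNet_monotone hε k.le_succ))]
      _ = x ⌊L / ε⌋₊ - x 0 := Finset.sum_range_sub x _
      _ ≤ L := by linarith [(hrange ⟨_, hts _, hvt ⌊L / ε⌋₊⟩).2, (hrange ⟨_, hts 0, hvt 0⟩).1]
  · obtain ⟨k, hk, hlt⟩ := exists_abs_sub_greedyNet_lt hε hrange (mem_image_of_mem v hu)
    exact ⟨k, hk, (hdist hu (hts k)).trans_lt (by rwa [hvt, abs_sub_comm])⟩

theorem setOf_infDist_le_subset_biUnion_closedBall {X : Type*} [PseudoMetricSpace X]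
    {S : Set X} (hS : S.Nonempty) {c : ℕ → X} {n : ℕ} {ρ ε : ℝ} (hε : 0 < ε)
    (hc : ∀ y ∈ S, ∃ k ≤ n, dist y (c k) < ε) :
    {x | infDist x S ≤ ρ} ⊆ ⋃ k ≤ n, closedBall (c k) (ρ + 2 * ε) := by
  intro x hx
  obtain ⟨y, hyS, hxy⟩ := (infDist_lt_iff hS).1 (hx.out.trans_lt (lt_add_of_pos_right ρ hε))
  obtain ⟨k, hk, hyk⟩ := hc y hyS
  exact mem_iUnion₂.2 ⟨k, hk, mem_closedBall.2 (by linarith [dist_triangle x y (c k)])⟩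

theorem stmt_0_general (γ : ℝ → EuclideanSpace ℝ (Fin 2)) (L ρ : ℝ) (hρ : 0 < ρ)
    (hrect : eVariationOn γ (Icc 0 1) ≠ ⊤)
    (hlen : (eVariationOn γ (Icc 0 1)).toReal = L) :
    volume {x : EuclideanSpace ℝ (Fin 2) | infDist x (γ '' Icc 0 1) ≤ ρ} ≤
      ENNReal.ofReal (2 * ρ * L + π * ρ ^ 2) := by
  set F : ℝ → ℝ := fun ε ↦ 2 * (ρ + 2 * ε) * L + π * (ρ + 2 * ε) ^ 2
  have hbound (ε : ℝ) (hε : 0 < ε) :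
      volume {x | infDist x (γ '' Icc 0 1) ≤ ρ} ≤ ENNReal.ofReal (F ε) := by
    obtain ⟨n, c, hsum, hnear⟩ :=
      BoundedVariationOn.exists_chain_dist_lt hrect (isLeast_Icc zero_le_one) hε
    have hr : 0 ≤ ρ + 2 * ε := by positivity
    calc volume {x | infDist x (γ '' Icc 0 1) ≤ ρ}
        ≤ volume (⋃ k ≤ n, closedBall (c k) (ρ + 2 * ε)) :=
          measure_mono (setOf_infDist_le_subset_biUnion_closedBall
            ((nonempty_Icc.2 zero_le_one).image γ) hε (forall_mem_image.2 hnear))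
      _ ≤ _ := volume_biUnion_closedBall_le c hr n
      _ ≤ ENNReal.ofReal (F ε) := by
          refine ENNReal.ofReal_le_ofReal ?_
          rw [hlen] at hsum
          nlinarith [mul_le_mul_of_nonneg_left hsum hr]
  have hF : Tendsto (fun ε ↦ ENNReal.ofReal (F ε)) (𝓝[>] 0)
      (𝓝 (ENNReal.ofReal (2 * ρ * L + π * ρ ^ 2))) :=
    ((ENNReal.continuous_ofReal.comp (by fun_prop : Continuous F)).tendsto' 0 _
      (by simp [F])).mono_left nhdsWithin_le_nhds
  exact ge_of_tendsto hF (eventually_nhdsWithin_of_forall hbound)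

/-- The area swept by a disk of radius `ρ` centered on a closed rectifiable curve of
length `L` is at most `2ρL + πρ²`. -/
theorem stmt_0 (γ : ℝ → EuclideanSpace ℝ (Fin 2)) (L ρ : ℝ) (hρ : 0 < ρ)
    (hcont : ContinuousOn γ (Icc 0 1))
    (hclosed : γ 0 = γ 1)
    (hrect : eVariationOn γ (Icc 0 1) ≠ ⊤)
    (hlen : (eVariationOn γ (Icc 0 1)).toReal = L) :
    volume {x : EuclideanSpace ℝ (Fin 2) | infDist x (γ '' Icc 0 1) ≤ ρ} ≤
      ENNReal.ofReal (2 * ρ * L + π * ρ ^ 2) :=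
  stmt_0_general γ L ρ hρ hrect hlen
end

section
/- Let δ > 0 and let D₁, …, Dₙ be pairwise disjoint closed disks of radius δ in ℝ², each of which intersects the image of a closed rectifiable curve of length L. Then πδ²·n ≤ 4δL + 4πδ²; in particular, n ≤ 4L/(πδ) + 4. -/
/-!
Pick on the curve a point `pᵢ` in each disk `Dᵢ`. The disjoint disks lie in the balls of
radius `R = 2δ` about the `pᵢ`, so `πδ²n` is at most the area of the union of these balls.
Listing the `pᵢ` in the order the curve visits them, each new ball adds at most the lune
`B(pₖ₊₁, R) \ B(pₖ, R)`, of area at most `2R·|pₖ - pₖ₊₁|`, so the union has area at most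
`πR² + 2R·L`.
-/

open Set Metric MeasureTheory Real

theorem measurePreserving_shear {α : Type*} [MeasureSpace α] [SFinite (volume : Measure α)]
    (g : α → ℝ) (hg : Measurable g) :
    MeasurePreserving (fun p : α × ℝ => (p.1, p.2 - g p.1)) volume volume := by
  rw [Measure.volume_eq_prod]
  exact (MeasurePreserving.id volume).skew_product (g := fun a y => y - g a)
    (measurable_snd.sub (hg.comp measurable_fst))
    (.of_forall fun a => map_sub_right_eq_self volume (g a))

theorem mem_Icc_and_sub_sqrt_mem_Ioc {R d h s : ℝ} (hR : 0 ≤ R) (hd : 0 ≤ d)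
    (hy : h ^ 2 + (s - d) ^ 2 ≤ R ^ 2) (hx : R ^ 2 < h ^ 2 + s ^ 2) :
    h ∈ Icc (-R) R ∧ s - √(R ^ 2 - h ^ 2) ∈ Ioc 0 d := by
  have hs : 0 < s := by
    by_contra! hs
    nlinarith
  refine ⟨abs_le.1 (abs_le_of_sq_le_sq (by nlinarith) hR), ?_, ?_⟩
  · exact sub_pos.2 ((sqrt_lt' hs).2 (by linarith))
  · have := abs_le_sqrt (h := (by linarith : (s - d) ^ 2 ≤ R ^ 2 - h ^ 2))
    linarith [le_abs_self (s - d)]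

theorem volume_closedBall_diff_closedBall_eq {E : Type*} [NormedAddCommGroup E]
    [InnerProductSpace ℝ E] [FiniteDimensional ℝ E] [MeasurableSpace E] [BorelSpace E]
    (x y v : E) (hv : ‖v‖ = dist x y) (R : ℝ) :
    volume (closedBall y R \ closedBall x R) = volume (closedBall v R \ closedBall 0 R) := by
  set ρ := (ℝ ∙ (y - x - v))ᗮ.reflection
  have hρ : ρ (y - x) = v := Submodule.reflection_sub (by rw [hv, dist_comm, dist_eq_norm])
  have hmp : MeasurePreserving (fun z => ρ (z - x)) volume volume :=
    ρ.measurePreserving.comp (measurePreserving_sub_right volume x)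
  have hpre : (fun z => ρ (z - x)) ⁻¹' (closedBall v R \ closedBall 0 R) =
      closedBall y R \ closedBall x R := by
    ext z
    simp only [mem_preimage, mem_sdiff, mem_closedBall, ← hρ, ρ.dist_map, dist_zero_right,
      ρ.norm_map, dist_sub_right, ← dist_eq_norm]
  rw [← hpre, hmp.measure_preimage
    (measurableSet_closedBall.diff measurableSet_closedBall).nullMeasurableSet]

/-- The shear `(h, s) ↦ (h, s - √(R² - h²))`, which flattens the upper arc of `∂B(0, R)` onto the
axis, maps the lune into the rectangle `[-R, R] × (0, d]`. -/
theorem volume_closedBall_smul_single_diff_closedBall_le {R d : ℝ} (hR : 0 ≤ R) (hd : 0 ≤ d) :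
    volume (closedBall (d • EuclideanSpace.single 1 1 : EuclideanSpace ℝ (Fin 2)) R \
      closedBall 0 R) ≤ ENNReal.ofReal (2 * R * d) := by
  set Φ : EuclideanSpace ℝ (Fin 2) → ℝ × ℝ := fun z => (z 0, z 1 - √(R ^ 2 - z 0 ^ 2))
  have hΦ : MeasurePreserving Φ volume volume :=
    (measurePreserving_shear (fun h => √(R ^ 2 - h ^ 2)) (by fun_prop)).comp
      ((volume_preserving_finTwoArrow ℝ).comp (PiLp.volume_preserving_ofLp (Fin 2)))
  have hsub : closedBall (d • EuclideanSpace.single 1 1) R \ closedBall 0 R ⊆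
      Φ ⁻¹' (Icc (-R) R ×ˢ Ioc 0 d) := by
    rintro z ⟨hy, hx⟩
    simp only [mem_closedBall, EuclideanSpace.dist_eq, EuclideanSpace.norm_eq, PiLp.smul_apply,
      PiLp.single_apply, smul_eq_mul, mul_ite, mul_one, mul_zero, dist_eq, norm_eq_abs, sq_abs,
      Fin.sum_univ_two, zero_ne_one, ↓reduceIte, sub_zero, dist_zero_right, sqrt_le_left hR,
      not_le] at hy hx
    exact mem_Icc_and_sub_sqrt_mem_Ioc hR hd hy hx
  calc volume (closedBall (d • EuclideanSpace.single 1 1) R \ closedBall 0 R)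
      ≤ volume (Φ ⁻¹' (Icc (-R) R ×ˢ Ioc 0 d)) := measure_mono hsub
    _ = volume (Icc (-R) R) * volume (Ioc 0 d) := by
      rw [hΦ.measure_preimage (measurableSet_Icc.prod measurableSet_Ioc).nullMeasurableSet,
        Measure.volume_eq_prod, Measure.prod_prod]
    _ = ENNReal.ofReal (2 * R * d) := by
      rw [Real.volume_Icc, Real.volume_Ioc, ← ENNReal.ofReal_mul (by linarith)]
      ring_nf

theorem EuclideanSpace.volume_closedBall_fin_two_eq_ofReal (x : EuclideanSpace ℝ (Fin 2)) {r : ℝ}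
    (hr : 0 ≤ r) : volume (closedBall x r) = ENNReal.ofReal (π * r ^ 2) := by
  rw [EuclideanSpace.volume_closedBall_fin_two, ← ENNReal.ofReal_pow hr,
    ← ENNReal.ofReal_mul (by positivity), mul_comm]

theorem volume_closedBall_diff_closedBall_le_s1 {R : ℝ} (hR : 0 ≤ R)
    (x y : EuclideanSpace ℝ (Fin 2)) :
    volume (closedBall y R \ closedBall x R) ≤ ENNReal.ofReal (2 * R) * edist x y := by
  rw [volume_closedBall_diff_closedBall_eq x y (dist x y • EuclideanSpace.single 1 1)
    (by simp [norm_smul]) R, edist_dist, ← ENNReal.ofReal_mul (by positivity)]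
  exact volume_closedBall_smul_single_diff_closedBall_le hR dist_nonneg

theorem volume_biUnion_range_closedBall_le {R : ℝ} (hR : 0 ≤ R)
    (q : ℕ → EuclideanSpace ℝ (Fin 2)) (m : ℕ) :
    volume (⋃ k ∈ Finset.range (m + 1), closedBall (q k) R) ≤
      ENNReal.ofReal (π * R ^ 2) +
        ENNReal.ofReal (2 * R) * ∑ k ∈ Finset.range m, edist (q k) (q (k + 1)) := by
  induction m with
  | zero => simp [EuclideanSpace.volume_closedBall_fin_two_eq_ofReal _ hR]
  | succ m ih =>
    set U := ⋃ k ∈ Finset.range (m + 1), closedBall (q k) R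
    rw [Finset.range_add_one, Finset.set_biUnion_insert, Finset.sum_range_succ, mul_add]
    calc volume (closedBall (q (m + 1)) R ∪ U)
        = volume ((closedBall (q (m + 1)) R \ U) ∪ U) := by rw [sdiff_union_self]
      _ ≤ volume (closedBall (q (m + 1)) R \ closedBall (q m) R) + volume U := by
        refine (measure_union_le _ _).trans ?_
        gcongr
        exact subset_biUnion_of_mem (u := fun k => closedBall (q k) R)
          (Finset.self_mem_range_succ m)
      _ ≤ ENNReal.ofReal (2 * R) * edist (q m) (q (m + 1)) + (ENNReal.ofReal (π * R ^ 2) +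
            ENNReal.ofReal (2 * R) * ∑ k ∈ Finset.range m, edist (q k) (q (k + 1))) :=
        add_le_add (volume_closedBall_diff_closedBall_le_s1 hR _ _) ih
      _ = _ := by ring

theorem exists_monotone_enumeration {α : Type*} [LinearOrder α] {m : ℕ} (t : Fin (m + 1) → α) :
    ∃ u : ℕ → α, Monotone u ∧ (∀ k, u k ∈ range t) ∧ ∀ i, ∃ k < m + 1, u k = t i := by
  set σ := Tuple.sort t
  refine ⟨fun k => t (σ (Fin.clamp k m)), fun a b hab => Tuple.monotone_sort t ?_,
    fun k => mem_range_self _, fun i => ⟨σ.symm i, (σ.symm i).isLt, ?_⟩⟩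
  · simp only [Fin.le_def, Fin.coe_clamp]
    omega
  · have hclamp : Fin.clamp (σ.symm i) m = σ.symm i := Fin.ext (by simp [Fin.coe_clamp]; omega)
    simp only [hclamp, Equiv.apply_symm_apply]

theorem volume_iUnion_closedBall_le_eVariationOn {α : Type*} [LinearOrder α]
    (γ : α → EuclideanSpace ℝ (Fin 2)) (s : Set α) {R : ℝ} (hR : 0 ≤ R) {n : ℕ}
    (p : Fin n → EuclideanSpace ℝ (Fin 2)) (hp : ∀ i, p i ∈ γ '' s) :
    volume (⋃ i, closedBall (p i) R) ≤
      ENNReal.ofReal (π * R ^ 2) + ENNReal.ofReal (2 * R) * eVariationOn γ s := by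
  rcases n with _ | m
  · simp
  choose t hts hpt using hp
  obtain ⟨u, hu, hut, htu⟩ := exists_monotone_enumeration t
  have hus : ∀ k, u k ∈ s := fun k => by
    obtain ⟨i, hi⟩ := hut k
    exact hi ▸ hts i
  have hcover : ⋃ i, closedBall (p i) R ⊆ ⋃ k ∈ Finset.range (m + 1), closedBall (γ (u k)) R := by
    refine iUnion_subset fun i => ?_
    obtain ⟨k, hk, hki⟩ := htu i
    rw [← hpt i, ← hki]
    exact subset_biUnion_of_mem (u := fun k => closedBall (γ (u k)) R) (Finset.mem_range.2 hk)
  calc volume (⋃ i, closedBall (p i) R)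
      ≤ volume (⋃ k ∈ Finset.range (m + 1), closedBall (γ (u k)) R) := measure_mono hcover
    _ ≤ ENNReal.ofReal (π * R ^ 2) +
          ENNReal.ofReal (2 * R) * ∑ k ∈ Finset.range m, edist (γ (u k)) (γ (u (k + 1))) :=
      volume_biUnion_range_closedBall_le hR (γ ∘ u) m
    _ ≤ ENNReal.ofReal (π * R ^ 2) + ENNReal.ofReal (2 * R) * eVariationOn γ s := by
      gcongr
      simpa only [edist_comm] using eVariationOn.sum_le (f := γ) (n := m) hu hus

theorem stmt_1_general (n : ℕ) (δ L : ℝ) (hδ : 0 < δ)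
    (c : Fin n → EuclideanSpace ℝ (Fin 2))
    (γ : ℝ → EuclideanSpace ℝ (Fin 2))
    (hrect : eVariationOn γ (Icc 0 1) ≠ ⊤)
    (hlen : (eVariationOn γ (Icc 0 1)).toReal = L)
    (hdisj : ∀ i j : Fin n, i ≠ j →
      Disjoint (closedBall (c i) δ) (closedBall (c j) δ))
    (hvisit : ∀ i : Fin n, ((γ '' Icc 0 1) ∩ closedBall (c i) δ).Nonempty) :
    π * δ ^ 2 * n ≤ 4 * δ * L + 4 * π * δ ^ 2 ∧
      (n : ℝ) ≤ 4 * L / (π * δ) + 4 := by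
  have hL : 0 ≤ L := hlen ▸ ENNReal.toReal_nonneg
  have hV : eVariationOn γ (Icc 0 1) = ENNReal.ofReal L := by
    rw [← hlen, ENNReal.ofReal_toReal hrect]
  choose p hpγ hpc using hvisit
  have hcover : ⋃ i, closedBall (c i) δ ⊆ ⋃ i, closedBall (p i) (2 * δ) :=
    iUnion_mono fun i => closedBall_subset_closedBall' <| by
      rw [dist_comm]
      linarith [mem_closedBall.1 (hpc i)]
  have hvol : ENNReal.ofReal (π * δ ^ 2 * n) ≤ ENNReal.ofReal (4 * δ * L + 4 * π * δ ^ 2) :=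
    calc ENNReal.ofReal (π * δ ^ 2 * n) = volume (⋃ i, closedBall (c i) δ) := by
          rw [measure_iUnion hdisj fun _ => measurableSet_closedBall]
          simp [EuclideanSpace.volume_closedBall_fin_two_eq_ofReal _ hδ.le, ENNReal.ofReal_mul,
            mul_comm]
      _ ≤ volume (⋃ i, closedBall (p i) (2 * δ)) := measure_mono hcover
      _ ≤ ENNReal.ofReal (π * (2 * δ) ^ 2) +
            ENNReal.ofReal (2 * (2 * δ)) * eVariationOn γ (Icc 0 1) :=
        volume_iUnion_closedBall_le_eVariationOn γ _ (by positivity) p hpγ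
      _ = ENNReal.ofReal (4 * δ * L + 4 * π * δ ^ 2) := by
        rw [hV, ← ENNReal.ofReal_mul (by positivity),
          ← ENNReal.ofReal_add (by positivity) (by positivity)]
        ring_nf
  have hfirst := (ENNReal.ofReal_le_ofReal_iff (by positivity)).1 hvol
  refine ⟨hfirst, ?_⟩
  rw [div_add' _ _ _ (by positivity), le_div_iff₀ (by positivity)]
  nlinarith [pi_pos]

/-- Packing bound: if `n` pairwise disjoint closed disks of radius `δ` each intersect the
image of a closed rectifiable curve of length `L`, then `πδ²n ≤ 4δL + 4πδ²`, and in
particular `n ≤ 4L/(πδ) + 4`. -/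
theorem stmt_1 (n : ℕ) (δ L : ℝ) (hδ : 0 < δ)
    (c : Fin n → EuclideanSpace ℝ (Fin 2))
    (γ : ℝ → EuclideanSpace ℝ (Fin 2))
    (hcont : ContinuousOn γ (Icc 0 1))
    (hclosed : γ 0 = γ 1)
    (hrect : eVariationOn γ (Icc 0 1) ≠ ⊤)
    (hlen : (eVariationOn γ (Icc 0 1)).toReal = L)
    (hdisj : ∀ i j : Fin n, i ≠ j →
      Disjoint (closedBall (c i) δ) (closedBall (c j) δ))
    (hvisit : ∀ i : Fin n, ((γ '' Icc 0 1) ∩ closedBall (c i) δ).Nonempty) :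
    π * δ ^ 2 * n ≤ 4 * δ * L + 4 * π * δ ^ 2 ∧
      (n : ℝ) ≤ 4 * L / (π * δ) + 4 :=
  stmt_1_general n δ L hδ c γ hrect hlen hdisj hvisit
end

section
/- Let R be a finite family of closed unit disks in ℝ², and let I ⊆ R be a nonempty subfamily of pairwise disjoint disks such that every disk in R intersects some disk in I. Let P be a closed polygonal curve whose vertices, in cyclic order, are exactly the centers of the disks of I, each visited exactly once (consecutive vertices joined by straight segments). Then there exists a closed rectifiable curve of length at most π·length(P) + 2π whose image intersects every disk in R. -/
/-!
Walk twice around the polygon along the unit circles around its vertices: between consecutive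
circles follow the edge, which has length `L - 2` for an edge of length `L`, and at each vertex
follow an arc of the unit circle from the point where the edge arrives to the point where the next
one leaves, counterclockwise on the first pass and clockwise on the second. The two arcs at a vertex
add up to the whole circle, so the curve has length `∑ (2π + 2 (L - 2))`, which is at most `π ∑ L`
because disjointness of the disks gives `L ≥ 2`. The curve contains every unit circle around a
center of `I`, and by maximality each disk of `R` has its center within distance `2` of such a
center, hence meets that circle. For a single disk the curve is the unit circle.
-/

open Set Metric MeasureTheory Real AffineMap Fin.NatCast

section Concat

variable {E : Type*}

noncomputable def concatCurves (γ : ℕ → ℝ → E) (t : ℝ) : E := γ ⌊t⌋₊ (t - ⌊t⌋₊)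

variable {γ : ℕ → ℝ → E}

lemma concatCurves_natCast (m : ℕ) : concatCurves γ m = γ m 0 := by
  simp [concatCurves]

lemma eqOn_concatCurves {m : ℕ} (h : γ m 1 = γ (m + 1) 0) :
    EqOn (concatCurves γ) (fun t => γ m (t - m)) (Icc m (m + 1)) := by
  rintro t ⟨hmt, htm⟩
  rcases htm.lt_or_eq with htm | rfl
  · simp [concatCurves, Nat.floor_eq_on_Ico m t ⟨hmt, htm⟩]
  · rw [← Nat.cast_succ, concatCurves_natCast]
    simp [h]

lemma image_subset_image_concatCurves {N m : ℕ} (hm : m < N) (h : γ m 1 = γ (m + 1) 0) :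
    γ m '' Icc 0 1 ⊆ concatCurves γ '' Icc 0 N := by
  rintro _ ⟨s, ⟨hs₀, hs₁⟩, rfl⟩
  have hmN : (m : ℝ) + 1 ≤ N := by exact_mod_cast hm
  refine ⟨m + s, ⟨by positivity, by linarith⟩, ?_⟩
  rw [eqOn_concatCurves h (show (m : ℝ) + s ∈ Icc (m : ℝ) (m + 1) from ⟨by linarith, by linarith⟩)]
  simp

variable [PseudoEMetricSpace E]

lemma continuousOn_concatCurves {N : ℕ} (hγ : ∀ m < N, ContinuousOn (γ m) (Icc 0 1))
    (hjoin : ∀ m < N, γ m 1 = γ (m + 1) 0) : ContinuousOn (concatCurves γ) (Icc 0 N) := by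
  induction N with
  | zero => simp
  | succ n ih =>
    rw [Nat.cast_succ, ← Icc_union_Icc_eq_Icc n.cast_nonneg (by linarith)]
    refine (ih (fun m hm => hγ m (by omega)) (fun m hm => hjoin m (by omega))).union_of_isClosed
      ?_ isClosed_Icc isClosed_Icc
    refine ContinuousOn.congr ?_ (eqOn_concatCurves (hjoin n n.lt_succ_self))
    refine (hγ n n.lt_succ_self).comp (by fun_prop) ?_
    rintro t ⟨h₁, h₂⟩
    constructor <;> linarith

lemma eVariationOn_concatCurves_le {N : ℕ} (hjoin : ∀ m < N, γ m 1 = γ (m + 1) 0) :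
    eVariationOn (concatCurves γ) (Icc 0 N) ≤
      ∑ m ∈ Finset.range N, eVariationOn (γ m) (Icc 0 1) := by
  rw [← Nat.cast_zero, ← eVariationOn.sum' _ Nat.mono_cast]
  gcongr with m hm
  rw [Nat.cast_succ, eVariationOn.eq_of_eqOn (eqOn_concatCurves (hjoin m (by simpa using hm)))]
  refine eVariationOn.comp_le_of_monotoneOn (γ m) (fun t => t - m)
    (fun a _ b _ hab => by simpa using hab) ?_
  rintro t ⟨h₁, h₂⟩
  simp only [mem_Icc, Nat.cast_zero, sub_nonneg]
  constructor <;> linarith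

end Concat

lemma LipschitzWith.eVariationOn_comp_lineMap_le {V E : Type*} [SeminormedAddCommGroup V]
    [NormedSpace ℝ V] [PseudoEMetricSpace E] {K : NNReal} {f : V → E} (hf : LipschitzWith K f)
    (p q : V) : eVariationOn (f ∘ lineMap p q) (Icc (0 : ℝ) 1) ≤ K * edist p q := by
  have hvar := ((hf.comp (lipschitzWith_lineMap p q)).lipschitzOnWith (s := Icc (0 : ℝ) 1)
    ).comp_eVariationOn_le (g := id) (mapsTo_id _)
  have hid : eVariationOn (id : ℝ → ℝ) (Icc 0 1) ≤ 1 := by simp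
  calc eVariationOn (f ∘ lineMap p q) (Icc (0 : ℝ) 1) ≤ (K * nndist p q : NNReal) * 1 :=
        hvar.trans (by gcongr)
    _ = K * edist p q := by rw [mul_one, ENNReal.coe_mul, edist_nndist]

namespace Complex

lemma dist_circleMap_arg_sub (c z : ℂ) (r : ℝ) :
    dist (circleMap c r (arg (z - c))) z = |r - dist z c| := by
  have h := norm_mul_exp_arg_mul_I (z - c)
  have : circleMap c r (arg (z - c)) - z = ((r - ‖z - c‖ : ℝ) : ℂ) * exp (arg (z - c) * I) := by
    simp only [circleMap]; push_cast; linear_combination h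
  rw [dist_eq_norm, this, norm_mul, norm_exp_ofReal_mul_I, mul_one, norm_real, norm_eq_abs,
    dist_eq_norm]

lemma dist_circleMap_arg_circleMap_arg_neg (c : ℂ) {w : ℂ} (hw : w ≠ 0) :
    dist (circleMap c 1 (arg w)) (circleMap (c + w) 1 (arg (-w))) = |‖w‖ - 2| := by
  have hu := norm_mul_exp_arg_mul_I w
  have hv := norm_mul_exp_arg_mul_I (-w)
  rw [norm_neg] at hv
  have hexp : exp (arg (-w) * I) = -exp (arg w * I) := by
    have : (‖w‖ : ℂ) ≠ 0 := by exact_mod_cast norm_ne_zero_iff.2 hw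
    apply mul_left_cancel₀ this
    linear_combination hv + hu
  have : circleMap c 1 (arg w) - circleMap (c + w) 1 (arg (-w)) =
      ((2 - ‖w‖ : ℝ) : ℂ) * exp (arg w * I) := by
    simp only [circleMap, hexp]; push_cast; linear_combination hu
  rw [dist_eq_norm, this, norm_mul, norm_exp_ofReal_mul_I, mul_one, norm_real, norm_eq_abs,
    abs_sub_comm]

end Complex

noncomputable def arc (c : ℂ) (a b : ℝ) : ℝ → ℂ := circleMap c 1 ∘ lineMap a b

lemma continuous_arc (c : ℂ) (a b : ℝ) : Continuous (arc c a b) :=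
  (continuous_circleMap c 1).comp AffineMap.lineMap_continuous

lemma eVariationOn_arc_le (c : ℂ) (a b : ℝ) :
    eVariationOn (arc c a b) (Icc 0 1) ≤ ENNReal.ofReal |b - a| := by
  simpa [arc, edist_dist, Real.dist_eq, abs_sub_comm] using
    (lipschitzWith_circleMap c 1).eVariationOn_comp_lineMap_le a b

lemma image_arc (c : ℂ) (a b : ℝ) : arc c a b '' Icc 0 1 = circleMap c 1 '' uIcc a b := by
  rw [arc, image_comp, ← segment_eq_image_lineMap, segment_eq_uIcc]

lemma range_circleMap_subset_union {a b : ℝ} (hab : a ≤ b) (hba : b ≤ a + 2 * π) (c : ℂ) (R : ℝ) :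
    range (circleMap c R) ⊆ circleMap c R '' Icc (b - 2 * π) a ∪ circleMap c R '' Icc a b := by
  rw [← (periodic_circleMap c R).image_Ioc two_pi_pos (b - 2 * π), sub_add_cancel, ← image_union,
    Icc_union_Icc_eq_Icc (by linarith) hab]
  exact image_mono Ioc_subset_Icc_self

lemma Finset.sum_range_two_mul_eq {M : Type*} [AddCommMonoid M] (f : ℕ → M) (n : ℕ) :
    ∑ m ∈ Finset.range (2 * n), f m = ∑ i ∈ Finset.range n, (f (2 * i) + f (2 * i + 1)) := by
  induction n with
  | zero => simp
  | succ n ih => rw [mul_add, mul_one, Finset.sum_range_succ, Finset.sum_range_succ,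
      Finset.sum_range_succ, ih, add_assoc]

lemma Finset.sum_range_four_mul_eq {M : Type*} [AddCommMonoid M] (f : ℕ → M) (n : ℕ) :
    ∑ m ∈ Finset.range (4 * n), f m = ∑ j ∈ Finset.range n,
      (f (2 * j) + f (2 * j + 1) + (f (2 * (n + j)) + f (2 * (n + j) + 1))) := by
  rw [show 4 * n = 2 * (n + n) by ring, Finset.sum_range_two_mul_eq, Finset.sum_range_add,
    ← Finset.sum_add_distrib]

lemma Fin.natCast_add_left_self (n j : ℕ) : ((n + 1 + j : ℕ) : Fin (n + 1)) = j := by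
  simp

lemma Fin.self_ne_add_one {n : ℕ} (hn : 0 < n) (j : Fin (n + 1)) : j ≠ j + 1 := fun h => by
  have : (1 : Fin (n + 1)) = 0 := by simpa using h
  rw [Fin.one_eq_zero_iff] at this
  omega

namespace PolygonTour

variable {k : ℕ} (z : Fin (k + 1) → ℂ)

noncomputable def entryAngle (j : Fin (k + 1)) : ℝ := Complex.arg (z (j - 1) - z j)

noncomputable def exitAngle (j : Fin (k + 1)) : ℝ :=
  toIcoMod two_pi_pos (entryAngle z j) (Complex.arg (z (j + 1) - z j))

noncomputable def edge (j : Fin (k + 1)) : ℝ → ℂ :=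
  lineMap (circleMap (z j) 1 (exitAngle z j)) (circleMap (z (j + 1)) 1 (entryAngle z (j + 1)))

/- Pieces `2j` and `2j + 1` are the arc around `z j` and the edge towards the circle around
`z (j + 1)`. The tour goes twice around the polygon: on the first pass the arcs run
counterclockwise from the entry to the exit angle, on the second clockwise, so that the two arcs
at `z j` together make up the whole circle. -/
noncomputable def tourPiece (m : ℕ) : ℝ → ℂ :=
  let j : Fin (k + 1) := (m / 2 : ℕ)
  if Even m then
    arc (z j) (entryAngle z j) (if m < 2 * (k + 1) then exitAngle z j else exitAngle z j - 2 * π)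
  else edge z j

noncomputable def tour : ℝ → ℂ := concatCurves (tourPiece z) ∘ fun t => 4 * (k + 1) * t

noncomputable def edgeLength (j : Fin (k + 1)) : ℝ :=
  dist (circleMap (z j) 1 (exitAngle z j)) (circleMap (z (j + 1)) 1 (entryAngle z (j + 1)))

lemma tourPiece_two_mul (j : ℕ) : tourPiece z (2 * j) = arc (z j) (entryAngle z j)
    (if j < k + 1 then exitAngle z j else exitAngle z j - 2 * π) := by
  simp [tourPiece]

lemma tourPiece_two_mul_add_one (j : ℕ) : tourPiece z (2 * j + 1) = edge z j := by
  simp only [tourPiece, Nat.not_even_two_mul_add_one, if_false]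
  rw [show (2 * j + 1) / 2 = j by omega]

lemma tourPiece_one_eq_zero (m : ℕ) : tourPiece z m 1 = tourPiece z (m + 1) 0 := by
  obtain ⟨j, rfl | rfl⟩ := Nat.even_or_odd' m
  · rw [tourPiece_two_mul, tourPiece_two_mul_add_one]
    simp only [arc, edge, Function.comp_apply, lineMap_apply_one, lineMap_apply_zero]
    split_ifs
    · rfl
    · exact (periodic_circleMap _ _).sub_eq _
  · rw [tourPiece_two_mul_add_one, show 2 * j + 1 + 1 = 2 * (j + 1) by ring, tourPiece_two_mul]
    simp [arc, edge, Nat.cast_succ]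

lemma tour_zero_eq_one : tour z 0 = tour z 1 := by
  have h := concatCurves_natCast (γ := tourPiece z) (4 * (k + 1))
  simp only [tour, Function.comp_apply, mul_zero, mul_one]
  push_cast at h
  rw [h, ← Nat.cast_zero, concatCurves_natCast, ← Nat.mul_zero 2,
    show 4 * (k + 1) = 2 * (2 * (k + 1)) by ring, tourPiece_two_mul, tourPiece_two_mul]
  have h0 : ((2 * (k + 1) : ℕ) : Fin (k + 1)) = 0 := by simp
  simp [arc, h0]

lemma continuousOn_tour : ContinuousOn (tour z) (Icc 0 1) := by
  refine (continuousOn_concatCurves (N := 4 * (k + 1)) (fun m _ => ?_)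
    (fun m _ => tourPiece_one_eq_zero z m)).comp (by fun_prop) ?_
  · unfold tourPiece; split_ifs
    · exact (continuous_arc _ _ _).continuousOn
    · exact (continuous_arc _ _ _).continuousOn
    · exact AffineMap.lineMap_continuous.continuousOn
  · rintro t ⟨h₀, h₁⟩
    push_cast
    constructor <;> nlinarith

lemma edgeLength_nonneg (j : Fin (k + 1)) : 0 ≤ edgeLength z j := dist_nonneg

lemma entryAngle_le_exitAngle (j : Fin (k + 1)) : entryAngle z j ≤ exitAngle z j :=
  (toIcoMod_mem_Ico two_pi_pos _ _).1

lemma exitAngle_lt (j : Fin (k + 1)) : exitAngle z j < entryAngle z j + 2 * π :=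
  (toIcoMod_mem_Ico two_pi_pos _ _).2

lemma eVariationOn_tourPiece_le {j : ℕ} (hj : j < k + 1) :
    eVariationOn (tourPiece z (2 * j)) (Icc 0 1) + eVariationOn (tourPiece z (2 * j + 1)) (Icc 0 1)
      + (eVariationOn (tourPiece z (2 * (k + 1 + j))) (Icc 0 1)
        + eVariationOn (tourPiece z (2 * (k + 1 + j) + 1)) (Icc 0 1))
      ≤ ENNReal.ofReal (2 * π + 2 * edgeLength z j) := by
  have h₁ := entryAngle_le_exitAngle z j
  have h₂ := exitAngle_lt z j
  have hedge : eVariationOn (edge z j) (Icc 0 1) ≤ ENNReal.ofReal (edgeLength z j) := by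
    simpa [edge, edgeLength, edist_dist] using
      LipschitzWith.id.eVariationOn_comp_lineMap_le (K := 1) _ _
  rw [tourPiece_two_mul, tourPiece_two_mul_add_one, tourPiece_two_mul, tourPiece_two_mul_add_one,
    if_pos hj, if_neg (by omega), Fin.natCast_add_left_self]
  calc _ ≤ ENNReal.ofReal (exitAngle z j - entryAngle z j) + ENNReal.ofReal (edgeLength z j)
        + (ENNReal.ofReal (2 * π - (exitAngle z j - entryAngle z j))
          + ENNReal.ofReal (edgeLength z j)) := by
        gcongr
        · exact (eVariationOn_arc_le _ _ _).trans_eq (by rw [abs_of_nonneg (by linarith)])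
        · refine (eVariationOn_arc_le _ _ _).trans_eq ?_
          rw [abs_of_nonpos (by linarith)]
          ring_nf
    _ = ENNReal.ofReal (2 * π + 2 * edgeLength z j) := by
        have he := edgeLength_nonneg z j
        rw [← ENNReal.ofReal_add (by linarith) he, ← ENNReal.ofReal_add (by linarith) he,
          ← ENNReal.ofReal_add (by linarith) (by linarith)]
        ring_nf

lemma eVariationOn_tour_le : eVariationOn (tour z) (Icc 0 1) ≤
    ENNReal.ofReal (∑ j, (2 * π + 2 * edgeLength z j)) := by
  calc eVariationOn (tour z) (Icc 0 1)
      = eVariationOn (concatCurves (tourPiece z)) (Icc 0 (4 * (k + 1) : ℕ)) := by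
        rw [tour, eVariationOn.comp_eq_of_monotoneOn _ _
          ((monotone_mul_left_of_nonneg (by positivity)).monotoneOn _),
          image_mul_left_Icc (by positivity) zero_le_one]
        simp
    _ ≤ ∑ m ∈ Finset.range (4 * (k + 1)), eVariationOn (tourPiece z m) (Icc 0 1) :=
        eVariationOn_concatCurves_le fun m _ => tourPiece_one_eq_zero z m
    _ ≤ ∑ j ∈ Finset.range (k + 1), ENNReal.ofReal (2 * π + 2 * edgeLength z j) := by
        rw [Finset.sum_range_four_mul_eq]
        exact Finset.sum_le_sum fun j hj => eVariationOn_tourPiece_le z (Finset.mem_range.1 hj)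
    _ = ENNReal.ofReal (∑ j, (2 * π + 2 * edgeLength z j)) := by
        rw [← ENNReal.ofReal_sum_of_nonneg fun j _ => by
            have := edgeLength_nonneg z j
            positivity,
          ← Fin.sum_univ_eq_sum_range (fun j => 2 * π + 2 * edgeLength z j)]
        simp only [Fin.cast_val_eq_self]

lemma range_circleMap_subset_image_tour (j : Fin (k + 1)) :
    range (circleMap (z j) 1) ⊆ tour z '' Icc 0 1 := by
  have hpiece : ∀ m < 4 * (k + 1), tourPiece z m '' Icc 0 1 ⊆ tour z '' Icc 0 1 := by
    intro m hm
    rw [tour, image_comp, image_mul_left_Icc (by positivity) zero_le_one, mul_zero, mul_one]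
    exact_mod_cast image_subset_image_concatCurves hm (tourPiece_one_eq_zero z m)
  have h₁ := entryAngle_le_exitAngle z j
  have h₂ := exitAngle_lt z j
  have hj := j.isLt
  refine (range_circleMap_subset_union h₁ h₂.le _ _).trans (union_subset ?_ ?_)
  · have := hpiece (2 * (k + 1 + j)) (by omega)
    rwa [tourPiece_two_mul, if_neg (by omega), Fin.natCast_add_left_self, Fin.cast_val_eq_self,
      image_arc, uIcc_of_ge (by linarith)] at this
  · have := hpiece (2 * j) (by omega)
    rwa [tourPiece_two_mul, if_pos hj, Fin.cast_val_eq_self, image_arc, uIcc_of_le h₁] at this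

lemma circleMap_exitAngle (j : Fin (k + 1)) :
    circleMap (z j) 1 (exitAngle z j) = circleMap (z j) 1 (Complex.arg (z (j + 1) - z j)) :=
  (periodic_circleMap _ _).sub_zsmul_eq _

lemma entryAngle_add_one (j : Fin (k + 1)) :
    entryAngle z (j + 1) = Complex.arg (z j - z (j + 1)) := by
  simp [entryAngle]

lemma edgeLength_eq {j : Fin (k + 1)} (h : z j ≠ z (j + 1)) :
    edgeLength z j = |dist (z j) (z (j + 1)) - 2| := by
  rw [edgeLength, circleMap_exitAngle, entryAngle_add_one]
  have := Complex.dist_circleMap_arg_circleMap_arg_neg (z j) (sub_ne_zero.2 h.symm)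
  rwa [add_sub_cancel, neg_sub, ← dist_eq_norm, dist_comm (z (j + 1))] at this

lemma edgeLength_eq_zero {j : Fin (k + 1)} (h : z (j + 1) = z j) : edgeLength z j = 0 := by
  rw [edgeLength, circleMap_exitAngle, entryAngle_add_one, h, sub_self, dist_self]

lemma sum_two_pi_add_two_mul_edgeLength_le (hsep : 0 < k → ∀ j, 2 ≤ dist (z j) (z (j + 1))) :
    ∑ j, (2 * π + 2 * edgeLength z j) ≤ π * ∑ j, dist (z j) (z (j + 1)) + 2 * π := by
  rcases Nat.eq_zero_or_pos k with rfl | hk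
  · simp [edgeLength_eq_zero z (congrArg z (Subsingleton.elim (α := Fin 1) _ _))]
  · have hπ := pi_gt_three
    suffices ∀ j, 2 * π + 2 * edgeLength z j ≤ π * dist (z j) (z (j + 1)) by
      rw [Finset.mul_sum]
      linarith [Finset.sum_le_sum fun j (_ : j ∈ Finset.univ) => this j]
    intro j
    have hd := hsep hk j
    rw [edgeLength_eq z (dist_pos.1 (by linarith)), abs_of_nonneg (by linarith)]
    -- `(π - 2) * (L - 2) ≥ 0`
    nlinarith

lemma exists_mem_image_tour_dist_le {j : Fin (k + 1)} {c : ℂ} (hc : dist c (z j) ≤ 2) :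
    ∃ p ∈ tour z '' Icc 0 1, dist p c ≤ 1 := by
  refine ⟨circleMap (z j) 1 (Complex.arg (c - z j)),
    range_circleMap_subset_image_tour z j (mem_range_self _), ?_⟩
  rw [Complex.dist_circleMap_arg_sub, abs_le]
  constructor <;> linarith [dist_nonneg (x := c) (y := z j)]

end PolygonTour

open PolygonTour

theorem stmt_4_general (C I : Finset (EuclideanSpace ℝ (Fin 2)))
    (hdisj : ∀ c ∈ I, ∀ d ∈ I, c ≠ d → Disjoint (closedBall c 1) (closedBall d 1))
    (hmax : ∀ c ∈ C, ∃ d ∈ I, (closedBall c 1 ∩ closedBall d 1).Nonempty)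
    (k : ℕ) (v : Fin (k + 1) → EuclideanSpace ℝ (Fin 2))
    (hinj : Function.Injective v)
    (hrange : Set.range v = (I : Set (EuclideanSpace ℝ (Fin 2))))
    (P : ℝ) (hP : P = ∑ i : Fin (k + 1), dist (v i) (v (i + 1))) :
    ∃ σ : ℝ → EuclideanSpace ℝ (Fin 2),
      ContinuousOn σ (Icc 0 1) ∧ σ 0 = σ 1 ∧
      eVariationOn σ (Icc 0 1) ≤ ENNReal.ofReal (π * P + 2 * π) ∧
      ∀ c ∈ C, ((σ '' Icc 0 1) ∩ closedBall c 1).Nonempty := by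
  let e := Complex.orthonormalBasisOneI.repr
  let z : Fin (k + 1) → ℂ := fun i => e.symm (v i)
  have hz : ∀ i j, dist (z i) (z j) = dist (v i) (v j) := fun i j => e.symm.dist_map _ _
  have hmem : ∀ i, v i ∈ I := fun i => by
    rw [← Finset.mem_coe, ← hrange]; exact mem_range_self i
  have hsep : 0 < k → ∀ j, 2 ≤ dist (z j) (z (j + 1)) := fun hk j => by
    rw [hz, ← one_add_one_eq_two]
    exact ((disjoint_closedBall_closedBall_iff zero_le_one zero_le_one).1
      (hdisj _ (hmem j) _ (hmem _) (hinj.ne (Fin.self_ne_add_one hk j)))).le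
  have hlen := sum_two_pi_add_two_mul_edgeLength_le z hsep
  simp only [hz, ← hP] at hlen
  refine ⟨e ∘ tour z, e.continuous.comp_continuousOn (continuousOn_tour z),
    congrArg e (tour_zero_eq_one z), ?_, fun c hc => ?_⟩
  · calc eVariationOn (e ∘ tour z) (Icc 0 1) ≤ (1 : NNReal) * eVariationOn (tour z) (Icc 0 1) :=
          e.lipschitz.lipschitzOnWith.comp_eVariationOn_le (mapsTo_univ _ _)
      _ ≤ ENNReal.ofReal (π * P + 2 * π) := by
          rw [ENNReal.coe_one, one_mul]
          exact (eVariationOn_tour_le z).trans (ENNReal.ofReal_le_ofReal hlen)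
  · obtain ⟨d, hd, hcd⟩ := hmax c hc
    obtain ⟨j, rfl⟩ : d ∈ range v := hrange ▸ hd
    have hcj : dist (e.symm c) (z j) ≤ 2 := (e.symm.dist_map _ _).trans_le
      ((dist_le_add_of_nonempty_closedBall_inter_closedBall hcd).trans_eq one_add_one_eq_two)
    obtain ⟨p, hp, hpc⟩ := exists_mem_image_tour_dist_le z hcj
    refine ⟨e p, image_comp e _ _ ▸ mem_image_of_mem e hp, ?_⟩
    rwa [mem_closedBall, ← e.symm.dist_map, e.symm_apply_apply]

/-- Inequality (1): given a family of closed unit disks `R` (given by its finite set `C`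
of centers), a nonempty maximal independent subfamily `I`, and a closed polygonal tour
`P` through the centers of `I` (vertices `v 0, …, v k` in cyclic order, each center of
`I` appearing exactly once), there is a closed rectifiable curve of length at most
`π·|P| + 2π` visiting every disk of the family. -/
theorem stmt_4 (C I : Finset (EuclideanSpace ℝ (Fin 2))) (hsub : I ⊆ C)
    (hdisj : ∀ c ∈ I, ∀ d ∈ I, c ≠ d → Disjoint (closedBall c 1) (closedBall d 1))
    (hmax : ∀ c ∈ C, ∃ d ∈ I, (closedBall c 1 ∩ closedBall d 1).Nonempty)
    (k : ℕ) (v : Fin (k + 1) → EuclideanSpace ℝ (Fin 2))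
    (hinj : Function.Injective v)
    (hrange : Set.range v = (I : Set (EuclideanSpace ℝ (Fin 2))))
    (P : ℝ) (hP : P = ∑ i : Fin (k + 1), dist (v i) (v (i + 1))) :
    ∃ σ : ℝ → EuclideanSpace ℝ (Fin 2),
      ContinuousOn σ (Icc 0 1) ∧ σ 0 = σ 1 ∧
      eVariationOn σ (Icc 0 1) ≤ ENNReal.ofReal (π * P + 2 * π) ∧
      ∀ c ∈ C, ((σ '' Icc 0 1) ∩ closedBall c 1).Nonempty :=
  stmt_4_general C I hdisj hmax k v hinj hrange P hP
end

section
/- Let w, h > 0 and let γ be a closed rectifiable curve in ℝ² whose image intersects each of the four closed sides of the axis-aligned rectangle [0, w] × [0, h]. Then the length of γ is at least 2·√(w² + h²). -/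
/-!
Charge each edge of a polygon inscribed in the curve with the weights `(w, h)`: by Cauchy–Schwarz,
`w |Δx| + h |Δy| ≤ √(w² + h²) · |Δp|`. Going once around a closed polygon, the horizontal
displacements add up to at least twice the horizontal extent and the vertical ones to at least
twice the vertical extent, so `√(w² + h²) · perimeter ≥ 2w² + 2h²`. Inscribing the polygon
through the four contact times bounds the perimeter by the length of the curve.
-/

open Set Real

theorem two_mul_dist_le_range_sum_dist {α : Type*} [PseudoMetricSpace α] {f : ℕ → α}
    {n : ℕ} (hf : f 0 = f n) {j k : ℕ} (hj : j ≤ n) (hk : k ≤ n) :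
    2 * dist (f j) (f k) ≤ ∑ i ∈ Finset.range n, dist (f i) (f (i + 1)) := by
  wlog hjk : j ≤ k generalizing j k
  · simpa [dist_comm] using this hk hj (le_of_not_ge hjk)
  have hsplit : ∑ i ∈ Finset.range n, dist (f i) (f (i + 1)) =
      ∑ i ∈ Finset.Ico 0 j, dist (f i) (f (i + 1)) +
        ∑ i ∈ Finset.Ico j k, dist (f i) (f (i + 1)) +
        ∑ i ∈ Finset.Ico k n, dist (f i) (f (i + 1)) := by
    rw [Finset.sum_Ico_consecutive _ (Nat.zero_le j) hjk,
      Finset.sum_Ico_consecutive _ (Nat.zero_le k) hk, Finset.range_eq_Ico]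
  have hwrap : dist (f j) (f k) ≤ dist (f 0) (f j) + dist (f k) (f n) :=
    calc dist (f j) (f k) ≤ dist (f j) (f n) + dist (f n) (f k) := dist_triangle _ _ _
      _ = dist (f 0) (f j) + dist (f k) (f n) := by
        rw [← hf, dist_comm (f j), dist_comm (f k), add_comm]
  have hhead := dist_le_Ico_sum_dist f (Nat.zero_le j)
  have hmiddle := dist_le_Ico_sum_dist f hjk
  have htail := dist_le_Ico_sum_dist f hk
  linarith

theorem mul_abs_add_mul_abs_le_sqrt_mul_dist (a b : ℝ) (P Q : EuclideanSpace ℝ (Fin 2)) :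
    a * |P 0 - Q 0| + b * |P 1 - Q 1| ≤ √(a ^ 2 + b ^ 2) * dist P Q := by
  rw [EuclideanSpace.dist_eq, Fin.sum_univ_two, Real.dist_eq, Real.dist_eq, sq_abs, sq_abs,
    ← Real.sqrt_mul (by positivity)]
  refine Real.le_sqrt_of_sq_le ?_
  nlinarith [sq_nonneg (b * |P 0 - Q 0| - a * |P 1 - Q 1|), sq_abs (P 0 - Q 0),
    sq_abs (P 1 - Q 1)]

theorem two_mul_sqrt_le_range_sum_dist {p : ℕ → EuclideanSpace ℝ (Fin 2)} {n : ℕ}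
    (hp : p 0 = p n) {i j k l : ℕ} (hi : i ≤ n) (hj : j ≤ n) (hk : k ≤ n) (hl : l ≤ n) :
    2 * √((p i 0 - p j 0) ^ 2 + (p k 1 - p l 1) ^ 2) ≤
      ∑ m ∈ Finset.range n, dist (p m) (p (m + 1)) := by
  set a := |p i 0 - p j 0|
  set b := |p k 1 - p l 1|
  set r := √(a ^ 2 + b ^ 2)
  have hx : 2 * a ≤ ∑ m ∈ Finset.range n, |p m 0 - p (m + 1) 0| := by
    simpa only [Real.dist_eq] using
      two_mul_dist_le_range_sum_dist (f := fun m ↦ p m 0) (congrArg (· 0) hp) hi hj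
  have hy : 2 * b ≤ ∑ m ∈ Finset.range n, |p m 1 - p (m + 1) 1| := by
    simpa only [Real.dist_eq] using
      two_mul_dist_le_range_sum_dist (f := fun m ↦ p m 1) (congrArg (· 1) hp) hk hl
  have hcs : a * ∑ m ∈ Finset.range n, |p m 0 - p (m + 1) 0|
      + b * ∑ m ∈ Finset.range n, |p m 1 - p (m + 1) 1|
      ≤ r * ∑ m ∈ Finset.range n, dist (p m) (p (m + 1)) := by
    simp only [Finset.mul_sum, ← Finset.sum_add_distrib]
    exact Finset.sum_le_sum fun m _ ↦ mul_abs_add_mul_abs_le_sqrt_mul_dist a b _ _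
  have hr : r ^ 2 = a ^ 2 + b ^ 2 := Real.sq_sqrt (by positivity)
  have hsq : (p i 0 - p j 0) ^ 2 + (p k 1 - p l 1) ^ 2 = a ^ 2 + b ^ 2 := by
    simp only [a, b, sq_abs]
  rw [hsq]
  have ha : 0 ≤ a := abs_nonneg _
  have hb : 0 ≤ b := abs_nonneg _
  have hD : 0 ≤ ∑ m ∈ Finset.range n, dist (p m) (p (m + 1)) :=
    Finset.sum_nonneg fun _ _ ↦ dist_nonneg
  rcases (Real.sqrt_nonneg (a ^ 2 + b ^ 2)).eq_or_lt with h0 | hpos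
  · rw [← h0]; linarith
  · nlinarith [mul_le_mul_of_nonneg_left hx ha, mul_le_mul_of_nonneg_left hy hb]

theorem Finset.exists_monotone_image_Iic_eq {α : Type*} [LinearOrder α] (s : Finset α)
    (hs : s.Nonempty) :
    ∃ (u : ℕ → α) (n : ℕ), Monotone u ∧ Set.range u = s ∧ u '' Set.Iic n = s := by
  have hcard := s.card_pos.2 hs
  let u : ℕ → α := fun i ↦ s.orderEmbOfFin rfl ⟨min i (s.card - 1), by omega⟩
  have hu : Monotone u := fun _ _ h ↦
    (s.orderEmbOfFin rfl).monotone (by simp only [Fin.mk_le_mk]; omega)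
  refine ⟨u, s.card - 1, hu, ?_, ?_⟩
  all_goals
    ext x
    simp only [← s.range_orderEmbOfFin rfl, Set.mem_image, Set.mem_Iic, Set.mem_range, u]
    constructor
  · rintro ⟨i, rfl⟩; exact ⟨_, rfl⟩
  · rintro ⟨i, rfl⟩; exact ⟨i.val, by congr; omega⟩
  · rintro ⟨i, -, rfl⟩; exact ⟨_, rfl⟩
  · rintro ⟨i, rfl⟩; exact ⟨i.val, by omega, by congr; omega⟩

theorem ofReal_range_sum_dist_le_eVariationOn {α E : Type*} [LinearOrder α]
    [PseudoMetricSpace E] (f : α → E) {s : Set α} {u : ℕ → α} (hu : Monotone u)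
    (us : ∀ i, u i ∈ s) (n : ℕ) :
    ENNReal.ofReal (∑ i ∈ Finset.range n, dist (f (u i)) (f (u (i + 1)))) ≤
      eVariationOn f s := by
  rw [ENNReal.ofReal_sum_of_nonneg fun _ _ ↦ dist_nonneg]
  simpa only [← edist_dist, edist_comm] using eVariationOn.sum_le (f := f) (n := n) hu us

theorem exists_closed_polygon_le_eVariationOn {α E : Type*} [LinearOrder α]
    [PseudoMetricSpace E] {f : α → E} {a b : α} (hf : f a = f b) {s : Finset α}
    (hs : ↑s ⊆ Icc a b) (ha : a ∈ s) (hb : b ∈ s) :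
    ∃ (u : ℕ → α) (n : ℕ), f (u 0) = f (u n) ∧ (∀ t ∈ s, ∃ j ≤ n, u j = t) ∧
      ENNReal.ofReal (∑ i ∈ Finset.range n, dist (f (u i)) (f (u (i + 1)))) ≤
        eVariationOn f (Icc a b) := by
  obtain ⟨u, n, hu, hrange, himage⟩ := s.exists_monotone_image_Iic_eq ⟨a, ha⟩
  have us : ∀ i, u i ∈ Icc a b := fun i ↦ hs (hrange ▸ mem_range_self i)
  have hindex : ∀ t ∈ s, ∃ j ≤ n, u j = t := fun t ht ↦ by
    obtain ⟨j, hj, rfl⟩ : t ∈ u '' Iic n := himage ▸ Finset.mem_coe.2 ht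
    exact ⟨j, hj, rfl⟩
  obtain ⟨j, -, hja⟩ := hindex a ha
  obtain ⟨k, hk, hkb⟩ := hindex b hb
  have hu0 : u 0 = a := le_antisymm (hja ▸ hu (Nat.zero_le j)) (us 0).1
  have hun : u n = b := le_antisymm (us n).2 (hkb ▸ hu hk)
  exact ⟨u, n, by rw [hu0, hun, hf], hindex, ofReal_range_sum_dist_le_eVariationOn f hu us n⟩

theorem stmt_5_general (w h : ℝ)
    (γ : ℝ → EuclideanSpace ℝ (Fin 2))
    (hclosed : γ 0 = γ 1)
    (hbottom : ((γ '' Icc 0 1) ∩ {p | p 0 ∈ Icc 0 w ∧ p 1 = 0}).Nonempty)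
    (htop : ((γ '' Icc 0 1) ∩ {p | p 0 ∈ Icc 0 w ∧ p 1 = h}).Nonempty)
    (hleft : ((γ '' Icc 0 1) ∩ {p | p 0 = 0 ∧ p 1 ∈ Icc 0 h}).Nonempty)
    (hright : ((γ '' Icc 0 1) ∩ {p | p 0 = w ∧ p 1 ∈ Icc 0 h}).Nonempty) :
    ENNReal.ofReal (2 * Real.sqrt (w ^ 2 + h ^ 2)) ≤ eVariationOn γ (Icc 0 1) := by
  obtain ⟨_, ⟨tB, hB, rfl⟩, -, hyB⟩ := hbottom
  obtain ⟨_, ⟨tT, hT, rfl⟩, -, hyT⟩ := htop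
  obtain ⟨_, ⟨tL, hL, rfl⟩, hxL, -⟩ := hleft
  obtain ⟨_, ⟨tR, hR, rfl⟩, hxR, -⟩ := hright
  have hs : ↑({0, 1, tB, tT, tL, tR} : Finset ℝ) ⊆ Icc (0 : ℝ) 1 := by
    simp [insert_subset_iff, hB, hT, hL, hR]
  obtain ⟨u, n, hcyc, hindex, hvar⟩ :=
    exists_closed_polygon_le_eVariationOn hclosed hs (by simp) (by simp)
  obtain ⟨iB, hiB, rfl⟩ := hindex tB (by simp)
  obtain ⟨iT, hiT, rfl⟩ := hindex tT (by simp)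
  obtain ⟨iL, hiL, rfl⟩ := hindex tL (by simp)
  obtain ⟨iR, hiR, rfl⟩ := hindex tR (by simp)
  have hperim := two_mul_sqrt_le_range_sum_dist (p := γ ∘ u) hcyc hiL hiR hiB hiT
  simp only [Function.comp_apply, hxL, hxR, hyB, hyT] at hperim
  refine le_trans (ENNReal.ofReal_le_ofReal ?_) hvar
  convert hperim using 3
  ring

/-- A closed rectifiable curve touching all four sides of the axis-aligned rectangle
`[0,w] × [0,h]` has length at least twice the diagonal, `2√(w² + h²)`. -/
theorem stmt_5 (w h : ℝ) (hw : 0 < w) (hh : 0 < h)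
    (γ : ℝ → EuclideanSpace ℝ (Fin 2))
    (hcont : ContinuousOn γ (Icc 0 1))
    (hclosed : γ 0 = γ 1)
    (hbottom : ((γ '' Icc 0 1) ∩ {p | p 0 ∈ Icc 0 w ∧ p 1 = 0}).Nonempty)
    (htop : ((γ '' Icc 0 1) ∩ {p | p 0 ∈ Icc 0 w ∧ p 1 = h}).Nonempty)
    (hleft : ((γ '' Icc 0 1) ∩ {p | p 0 = 0 ∧ p 1 ∈ Icc 0 h}).Nonempty)
    (hright : ((γ '' Icc 0 1) ∩ {p | p 0 = w ∧ p 1 ∈ Icc 0 h}).Nonempty) :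
    ENNReal.ofReal (2 * Real.sqrt (w ^ 2 + h ^ 2)) ≤ eVariationOn γ (Icc 0 1) :=
  stmt_5_general w h γ hclosed hbottom htop hleft hright
end

section
/- Let h ≥ 0, w ≥ 0 and a, b ≥ 0, and let γ : [0,1] → ℝ² be a rectifiable path with γ(0) = (0, a) and γ(1) = (w, h − b). Suppose there exist parameters s ≤ t in [0,1] such that the second coordinate of γ(s) equals 0 and the second coordinate of γ(t) equals h. Then the length of γ is at least √((h + a + b)² + w²). -/
open Set Metric MeasureTheory Real

/-- Reflection lower bound (inequality (5)): a rectifiable path from `(0, a)` to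
`(w, h − b)` that touches the line `y = 0` before touching the line `y = h` has
length at least `√((h + a + b)² + w²)`. -/
theorem stmt_6 (h w a b : ℝ) (hh : 0 ≤ h) (hw : 0 ≤ w) (ha : 0 ≤ a) (hb : 0 ≤ b)
    (γ : ℝ → EuclideanSpace ℝ (Fin 2))
    (hcont : ContinuousOn γ (Icc 0 1))
    (hrect : eVariationOn γ (Icc 0 1) ≠ ⊤)
    (hstart0 : γ 0 0 = 0) (hstart1 : γ 0 1 = a)
    (hend0 : γ 1 0 = w) (hend1 : γ 1 1 = h - b)
    (htouch : ∃ s t : ℝ, s ∈ Icc (0:ℝ) 1 ∧ t ∈ Icc (0:ℝ) 1 ∧ s ≤ t ∧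
      γ s 1 = 0 ∧ γ t 1 = h) :
    ENNReal.ofReal (Real.sqrt ((h + a + b) ^ 2 + w ^ 2)) ≤
      eVariationOn γ (Icc 0 1) := by
  obtain ⟨s, t, hs, ht, hst, hγs, hγt⟩ := htouch
  -- split the variation at s and t
  have h1 := eVariationOn.Icc_add_Icc γ (s := (univ : Set ℝ)) hs.1 hst (mem_univ s)
  have h2 := eVariationOn.Icc_add_Icc γ (s := (univ : Set ℝ)) (hs.1.trans hst) ht.2
    (mem_univ t)
  simp only [univ_inter] at h1 h2
  have split : eVariationOn γ (Icc 0 s) + eVariationOn γ (Icc s t)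
      + eVariationOn γ (Icc t 1) = eVariationOn γ (Icc 0 1) := by
    rw [h1, h2]
  have e1 : edist (γ 0) (γ s) ≤ eVariationOn γ (Icc 0 s) :=
    eVariationOn.edist_le γ ⟨le_rfl, hs.1⟩ ⟨hs.1, le_rfl⟩
  have e2 : edist (γ s) (γ t) ≤ eVariationOn γ (Icc s t) :=
    eVariationOn.edist_le γ ⟨le_rfl, hst⟩ ⟨hst, le_rfl⟩
  have e3 : edist (γ t) (γ 1) ≤ eVariationOn γ (Icc t 1) :=
    eVariationOn.edist_le γ ⟨le_rfl, ht.2⟩ ⟨ht.2, le_rfl⟩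
  -- reflected endpoints
  set A' : EuclideanSpace ℝ (Fin 2) := (WithLp.equiv 2 (Fin 2 → ℝ)).symm ![0, -a] with hA'
  set B' : EuclideanSpace ℝ (Fin 2) := (WithLp.equiv 2 (Fin 2 → ℝ)).symm ![w, h + b]
    with hB'
  have hA0 : A' 0 = 0 := rfl
  have hA1 : A' 1 = -a := rfl
  have hB0 : B' 0 = w := rfl
  have hB1 : B' 1 = h + b := rfl
  have deq : ∀ x y : EuclideanSpace ℝ (Fin 2),
      dist x y = Real.sqrt ((x 0 - y 0) ^ 2 + (x 1 - y 1) ^ 2) := by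
    intro x y
    rw [EuclideanSpace.dist_eq, Fin.sum_univ_two]
    simp [Real.dist_eq, sq_abs]
  have dA : dist A' (γ s) = dist (γ 0) (γ s) := by
    rw [deq, deq, hA0, hA1, hstart0, hstart1, hγs]
    ring_nf
  have dB : dist (γ t) B' = dist (γ t) (γ 1) := by
    rw [deq, deq, hB0, hB1, hend0, hend1, hγt]
    ring_nf
  have dAB : dist A' B' = Real.sqrt ((h + a + b) ^ 2 + w ^ 2) := by
    rw [deq, hA0, hA1, hB0, hB1]
    ring_nf
  have tri : Real.sqrt ((h + a + b) ^ 2 + w ^ 2) ≤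
      dist (γ 0) (γ s) + dist (γ s) (γ t) + dist (γ t) (γ 1) := by
    rw [← dAB, ← dA, ← dB]
    calc dist A' B' ≤ dist A' (γ s) + dist (γ s) B' := dist_triangle _ _ _
      _ ≤ dist A' (γ s) + (dist (γ s) (γ t) + dist (γ t) B') := by
          gcongr; exact dist_triangle _ _ _
      _ = dist A' (γ s) + dist (γ s) (γ t) + dist (γ t) B' := by ring
  calc ENNReal.ofReal (Real.sqrt ((h + a + b) ^ 2 + w ^ 2))
      ≤ ENNReal.ofReal (dist (γ 0) (γ s) + dist (γ s) (γ t) + dist (γ t) (γ 1)) :=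
        ENNReal.ofReal_le_ofReal tri
    _ = edist (γ 0) (γ s) + edist (γ s) (γ t) + edist (γ t) (γ 1) := by
        rw [ENNReal.ofReal_add (by positivity) dist_nonneg,
          ENNReal.ofReal_add dist_nonneg dist_nonneg, edist_dist, edist_dist, edist_dist]
    _ ≤ eVariationOn γ (Icc 0 s) + eVariationOn γ (Icc s t) + eVariationOn γ (Icc t 1) := by
        gcongr
    _ = eVariationOn γ (Icc 0 1) := split
end

section
/- If A, B, C are real numbers with 0 < A < π/2, 0 < B < π/2, 0 < C < π/2 and A + B + C = π, then sin A + sin B + sin C > 2. -/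
open Real

/-- For the angles of an acute triangle, `sin A + sin B + sin C > 2`. -/
theorem stmt_7 (A B C : ℝ)
    (hA : 0 < A) (hA' : A < π / 2)
    (hB : 0 < B) (hB' : B < π / 2)
    (hC : 0 < C) (hC' : C < π / 2)
    (hsum : A + B + C = π) :
    2 < Real.sin A + Real.sin B + Real.sin C := by
  have hcA : 0 < Real.cos A := Real.cos_pos_of_mem_Ioo ⟨by linarith [Real.pi_pos], hA'⟩
  have hcB : 0 < Real.cos B := Real.cos_pos_of_mem_Ioo ⟨by linarith [Real.pi_pos], hB'⟩
  have hcC : 0 < Real.cos C := Real.cos_pos_of_mem_Ioo ⟨by linarith [Real.pi_pos], hC'⟩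
  have hsA : 0 < Real.sin A := Real.sin_pos_of_pos_of_lt_pi hA (by linarith [Real.pi_pos])
  have hsB : 0 < Real.sin B := Real.sin_pos_of_pos_of_lt_pi hB (by linarith [Real.pi_pos])
  have hsC : 0 < Real.sin C := Real.sin_pos_of_pos_of_lt_pi hC (by linarith [Real.pi_pos])
  have hsA1 : Real.sin A < 1 := by
    nlinarith [Real.sin_sq_add_cos_sq A]
  have hsB1 : Real.sin B < 1 := by
    nlinarith [Real.sin_sq_add_cos_sq B]
  have hsC1 : Real.sin C < 1 := by
    nlinarith [Real.sin_sq_add_cos_sq C]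
  have hCeq : C = π - (A + B) := by linarith
  have hcosC : Real.cos C = -(Real.cos A * Real.cos B - Real.sin A * Real.sin B) := by
    rw [hCeq, Real.cos_pi_sub, Real.cos_add]
  have hsinC : Real.sin C = Real.sin A * Real.cos B + Real.cos A * Real.sin B := by
    rw [hCeq, Real.sin_pi_sub, Real.sin_add]
  have hcC' : 0 < Real.sin A * Real.sin B - Real.cos A * Real.cos B := by
    rw [hcosC] at hcC; linarith
  have key : 2 < Real.sin A ^ 2 + Real.sin B ^ 2 + Real.sin C ^ 2 := by
    rw [hsinC]
    nlinarith [Real.sin_sq_add_cos_sq A, Real.sin_sq_add_cos_sq B,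
      mul_pos (mul_pos hcA hcB) hcC']
  nlinarith [mul_pos hsA (sub_pos.mpr hsA1), mul_pos hsB (sub_pos.mpr hsB1),
    mul_pos hsC (sub_pos.mpr hsC1)]
end

section
/- Let A, B, C be three affinely independent points in ℝ² forming an acute triangle, let s = (dist(A,B) + dist(B,C) + dist(C,A))/2 be its semiperimeter, and let R be its circumradius (the radius of the unique circle passing through A, B, C). Then s > 2R. -/
/-!
By the law of sines each side of the triangle is `2 R` times the sine of the opposite angle, so
`s = R (sin α + sin β + sin γ)`. For an acute angle, Jordan's inequality `sin x > 2 x / π` holds,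
and summing it over the three angles gives `sin α + sin β + sin γ > 2 (α + β + γ) / π = 2`.
-/

open Real EuclideanGeometry Module

theorem Real.two_lt_sin_add_sin_add_sin {α β γ : ℝ} (hα : α < π / 2) (hβ : β < π / 2)
    (hγ : γ < π / 2) (hsum : α + β + γ = π) : 2 < sin α + sin β + sin γ := by
  have hsinα := mul_lt_sin (by linarith) hα
  have hsinβ := mul_lt_sin (by linarith) hβ
  have hsinγ := mul_lt_sin (by linarith) hγ
  calc 2 = 2 / π * (α + β + γ) := by rw [hsum]; field_simp
    _ < sin α + sin β + sin γ := by linarith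

namespace EuclideanGeometry

variable {V P : Type*} [NormedAddCommGroup V] [InnerProductSpace ℝ V] [MetricSpace P]
  [NormedAddTorsor V P]

theorem left_ne_of_angle_lt_pi_div_two {p₁ p₂ p₃ : P} (h : ∠ p₁ p₂ p₃ < π / 2) : p₁ ≠ p₂ := by
  rintro rfl
  -- the angle at a vertex coinciding with an endpoint is `π / 2` by convention
  simp at h

theorem right_ne_of_angle_lt_pi_div_two {p₁ p₂ p₃ : P} (h : ∠ p₁ p₂ p₃ < π / 2) : p₃ ≠ p₂ :=
  left_ne_of_angle_lt_pi_div_two (angle_comm p₁ p₂ p₃ ▸ h)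

theorem abs_sin_oangle_eq_sin_angle [Fact (finrank ℝ V = 2)] [Module.Oriented ℝ V (Fin 2)]
    {p₁ p₂ p₃ : P} (h₁ : p₁ ≠ p₂) (h₃ : p₃ ≠ p₂) : |(∡ p₁ p₂ p₃).sin| = sin (∠ p₁ p₂ p₃) := by
  rw [← Real.Angle.sin_toReal, abs_sin_eq_sin_abs_of_abs_le_pi (Real.Angle.abs_toReal_le_pi _),
    ← angle_eq_abs_oangle_toReal h₁ h₃]

theorem Sphere.dist_eq_two_mul_radius_mul_sin_angle [hd : Fact (finrank ℝ V = 2)] {s : Sphere P}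
    {p₁ p₂ p₃ : P} (hp₁ : p₁ ∈ s) (hp₂ : p₂ ∈ s) (hp₃ : p₃ ∈ s) (h₁₂ : p₁ ≠ p₂) (h₁₃ : p₁ ≠ p₃)
    (h₂₃ : p₂ ≠ p₃) : dist p₁ p₃ = 2 * s.radius * sin (∠ p₁ p₂ p₃) := by
  have : FiniteDimensional ℝ V := .of_fact_finrank_eq_two
  have : Module.Oriented ℝ V (Fin 2) := ⟨Basis.orientation (finBasisOfFinrankEq _ _ hd.out)⟩
  have h := dist_div_sin_oangle_eq_two_mul_radius hp₁ hp₂ hp₃ h₁₂ h₁₃ h₂₃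
  rw [abs_sin_oangle_eq_sin_angle h₁₂ h₂₃.symm] at h
  rcases eq_or_ne (sin (∠ p₁ p₂ p₃)) 0 with h0 | h0
  · -- a vanishing sine would force `s.radius = 0`, i.e. `p₁ = p₃`
    rw [h0, div_zero] at h
    linarith [dist_pos.2 h₁₃, dist_triangle_right p₁ p₃ s.center, mem_sphere.1 hp₁,
      mem_sphere.1 hp₃]
  · rw [← h, div_mul_cancel₀ _ h0]

end EuclideanGeometry

theorem stmt_8_general (A B C O : EuclideanSpace ℝ (Fin 2)) (R : ℝ)
    (hacuteA : ∠ B A C < π / 2)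
    (hacuteB : ∠ A B C < π / 2)
    (hacuteC : ∠ A C B < π / 2)
    (hOA : dist O A = R) (hOB : dist O B = R) (hOC : dist O C = R) :
    2 * R < (dist A B + dist B C + dist C A) / 2 := by
  have : Fact (finrank ℝ (EuclideanSpace ℝ (Fin 2)) = 2) := ⟨finrank_euclideanSpace_fin⟩
  have hBA := left_ne_of_angle_lt_pi_div_two hacuteA
  have hCA := right_ne_of_angle_lt_pi_div_two hacuteA
  have hCB := right_ne_of_angle_lt_pi_div_two hacuteB
  let s : Sphere (EuclideanSpace ℝ (Fin 2)) := ⟨O, R⟩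
  have hA : A ∈ s := mem_sphere'.2 hOA
  have hB : B ∈ s := mem_sphere'.2 hOB
  have hC : C ∈ s := mem_sphere'.2 hOC
  have hdAB : dist A B = 2 * R * sin (∠ A C B) :=
    s.dist_eq_two_mul_radius_mul_sin_angle hA hC hB hCA.symm hBA.symm hCB
  have hdBC : dist B C = 2 * R * sin (∠ B A C) :=
    s.dist_eq_two_mul_radius_mul_sin_angle hB hA hC hBA hCB.symm hCA.symm
  have hdCA : dist C A = 2 * R * sin (∠ C B A) :=
    s.dist_eq_two_mul_radius_mul_sin_angle hC hB hA hCB hCA hBA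
  have hsum := angle_add_angle_add_angle_eq_pi C hBA
  rw [angle_comm B C A, angle_comm C A B] at hsum
  have hsin := two_lt_sin_add_sin_add_sin hacuteC hacuteA hacuteB (by linarith)
  have hR : 0 < R := by linarith [dist_pos.2 hBA.symm, dist_triangle_left A B O]
  rw [hdAB, hdBC, hdCA, angle_comm C B A]
  nlinarith

/-- Fact 2: for an acute triangle, the semiperimeter exceeds twice the circumradius. -/
theorem stmt_8 (A B C O : EuclideanSpace ℝ (Fin 2)) (R : ℝ)
    (hind : AffineIndependent ℝ ![A, B, C])
    (hacuteA : ∠ B A C < π / 2)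
    (hacuteB : ∠ A B C < π / 2)
    (hacuteC : ∠ A C B < π / 2)
    (hOA : dist O A = R) (hOB : dist O B = R) (hOC : dist O C = R) :
    2 * R < (dist A B + dist B C + dist C A) / 2 :=
  stmt_8_general A B C O R hacuteA hacuteB hacuteC hOA hOB hOC
end

section
/- Let A, B, C be three affinely independent points in ℝ² forming an acute triangle, with inradius r, and let y be the perimeter of its orthic (pedal) triangle. Then r < y/4. -/
open Set Metric MeasureTheory Real EuclideanGeometry

/-!
Write `a, b, c` for the sides and `u, v, w` for the inner products of the edge vectors at
`A, B, C`; acuteness makes `u, v, w` positive, and `a² = v + w`, `b² = w + u`, `c² = u + v`.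
The feet of two altitudes seen from a vertex are at distance `a |cos A| = u a / (b c)`, so
`y = 2K / (a b c)` with `K = uv + vw + wu`, while the area is `√K / 2`. Hence `r < y / 4` becomes
`4 (a b c)² < K (a + b + c)²`, which follows from
`4 (v + w)(w + u)(u + v) = 4 (u + v + w) K - 4 u v w < 2 (a² + b² + c²) K` and the triangle
inequality `2 (a² + b² + c²) < (a + b + c)²`.
-/

theorem InnerProductGeometry.inner_pos_of_angle_lt_pi_div_two {E : Type*}
    [NormedAddCommGroup E] [InnerProductSpace ℝ E] {x y : E} (h : angle x y < π / 2) :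
    0 < inner ℝ x y := by
  rw [angle, arccos_lt_pi_div_two] at h
  by_contra! hxy
  exact h.not_ge (div_nonpos_of_nonpos_of_nonneg hxy (by positivity))

section Altitudes

variable {E : Type*} [NormedAddCommGroup E] [InnerProductSpace ℝ E]

lemma dist_sq_eq_inner_add_inner (X Y Z : E) :
    dist Y Z ^ 2 = inner ℝ (Z - Y) (X - Y) + inner ℝ (X - Z) (Y - Z) := by
  rw [dist_eq_norm, ← real_inner_self_eq_norm_sq]
  simp only [inner_sub_left, inner_sub_right, real_inner_comm X Y, real_inner_comm X Z,
    real_inner_comm Y Z]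
  ring

lemma exists_sub_eq_smul_of_mem_line_of_inner_eq_zero {X Y Z F : E} (hF : F ∈ line[ℝ, X, Z])
    (hperp : inner ℝ (Y - F) (Z - X) = (0 : ℝ)) :
    ∃ t : ℝ, F - X = t • (Z - X) ∧ t * ‖Z - X‖ ^ 2 = inner ℝ (Y - X) (Z - X) := by
  obtain ⟨t, rfl⟩ := mem_affineSpan_pair_iff_exists_lineMap_eq.1 hF
  rw [AffineMap.lineMap_apply_module', ← sub_sub, sub_right_comm, inner_sub_left,
    real_inner_smul_left, real_inner_self_eq_norm_sq] at hperp
  exact ⟨t, add_sub_cancel_right _ _, by linarith⟩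

lemma norm_smul_sub_smul_mul_eq {p q : E} {s t : ℝ} (hs : s * ‖q‖ ^ 2 = inner ℝ p q)
    (ht : t * ‖p‖ ^ 2 = inner ℝ p q) :
    ‖s • q - t • p‖ * (‖p‖ * ‖q‖) = |inner ℝ p q| * ‖p - q‖ := by
  rw [← sq_eq_sq₀ (by positivity) (by positivity), mul_pow, mul_pow, mul_pow, sq_abs,
    norm_sub_sq_real, norm_sub_sq_real, norm_smul, norm_smul, real_inner_smul_left,
    real_inner_smul_right, real_inner_comm p q, Real.norm_eq_abs, Real.norm_eq_abs, mul_pow,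
    mul_pow, sq_abs, sq_abs]
  set c := inner ℝ p q
  linear_combination ((s * ‖q‖ ^ 2 + c) * ‖p‖ ^ 2 - 2 * c * t * ‖p‖ ^ 2) * hs
    + ((t * ‖p‖ ^ 2 + c) * ‖q‖ ^ 2 - 2 * c ^ 2) * ht

lemma dist_feet_of_altitudes {X Y Z FY FZ : E} (hFY : FY ∈ line[ℝ, Z, X])
    (hY : inner ℝ (Y - FY) (Z - X) = (0 : ℝ)) (hFZ : FZ ∈ line[ℝ, X, Y])
    (hZ : inner ℝ (Z - FZ) (X - Y) = (0 : ℝ)) (hXY : X ≠ Y) (hXZ : X ≠ Z) :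
    dist FY FZ = |inner ℝ (Y - X) (Z - X)| * dist Y Z / (dist X Y * dist X Z) := by
  rw [Set.pair_comm] at hFY
  obtain ⟨s, hFYs, hs⟩ := exists_sub_eq_smul_of_mem_line_of_inner_eq_zero hFY hY
  have hZ' : inner ℝ (Z - FZ) (Y - X) = (0 : ℝ) := by
    rw [← neg_sub X Y, inner_neg_right, hZ, neg_zero]
  obtain ⟨t, hFZt, ht⟩ := exists_sub_eq_smul_of_mem_line_of_inner_eq_zero hFZ hZ'
  rw [real_inner_comm] at ht
  rw [dist_eq_norm, dist_eq_norm, dist_comm X Y, dist_comm X Z, dist_eq_norm, dist_eq_norm,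
    eq_div_iff (by simp [sub_eq_zero, hXY.symm, hXZ.symm]), ← sub_sub_sub_cancel_right FY FZ X,
    hFYs, hFZt, norm_smul_sub_smul_mul_eq hs ht, sub_sub_sub_cancel_right]

end Altitudes

section Area

open Pointwise

lemma volume_triangle_prod :
    volume {z : ℝ × ℝ | z.1 ∈ Icc 0 1 ∧ z.2 ∈ Icc 0 (1 - z.1)} = ENNReal.ofReal (1 / 2) := by
  have hslice (x : ℝ) :
      volume (Prod.mk x ⁻¹' {z : ℝ × ℝ | z.1 ∈ Icc 0 1 ∧ z.2 ∈ Icc 0 (1 - z.1)})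
        = (Icc 0 1).indicator (fun x => ENNReal.ofReal (1 - x)) x := by
    by_cases hx : x ∈ Icc (0 : ℝ) 1
    · rw [indicator_of_mem hx, show Prod.mk x ⁻¹' _ = Icc 0 (1 - x) by ext; simp [hx.1, hx.2]]
      simp
    · rw [indicator_of_notMem hx, show Prod.mk x ⁻¹' _ = ∅ by ext; simp_all]
      exact measure_empty
  rw [Measure.volume_eq_prod, Measure.prod_apply (by measurability), lintegral_congr hslice,
    lintegral_indicator measurableSet_Icc, ← ofReal_integral_eq_lintegral_ofReal]
  · rw [integral_Icc_eq_integral_Ioc, ← intervalIntegral.integral_of_le zero_le_one,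
      intervalIntegral.integral_comp_sub_left (fun x => x)]
    norm_num [integral_id]
  · exact (continuous_const.sub continuous_id).integrableOn_Icc
  · filter_upwards [ae_restrict_mem measurableSet_Icc] with x hx using sub_nonneg.2 hx.2

lemma volume_triangle_euclidean :
    volume {x : EuclideanSpace ℝ (Fin 2) | x 0 ∈ Icc 0 1 ∧ x 1 ∈ Icc 0 (1 - x 0)}
      = ENNReal.ofReal (1 / 2) := by
  rw [← volume_triangle_prod]
  exact ((volume_preserving_finTwoArrow ℝ).comp
    (EuclideanSpace.volume_preserving_symm_measurableEquiv_toLp (Fin 2))).measure_preimage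
    (s := {z : ℝ × ℝ | z.1 ∈ Icc 0 1 ∧ z.2 ∈ Icc 0 (1 - z.1)}) (by measurability)

lemma convexHull_zero_single_single :
    convexHull ℝ {0, EuclideanSpace.single 0 1, EuclideanSpace.single 1 1}
      = {x : EuclideanSpace ℝ (Fin 2) | x 0 ∈ Icc 0 1 ∧ x 1 ∈ Icc 0 (1 - x 0)} := by
  set T : Set (EuclideanSpace ℝ (Fin 2)) :=
    {0, EuclideanSpace.single 0 1, EuclideanSpace.single 1 1}
  refine (convexHull_min ?_ ?_).antisymm fun x ⟨⟨hx0, _⟩, hx1, hx2⟩ => ?_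
  · rintro x (rfl | rfl | rfl) <;> simp
  · rintro x ⟨⟨hx0, _⟩, hx1, hx2⟩ y ⟨⟨hy0, _⟩, hy1, hy2⟩ a b ha hb hab
    simp only [mem_ofPred_eq, mem_Icc, PiLp.add_apply, PiLp.smul_apply, smul_eq_mul]
    refine ⟨⟨by positivity, ?_⟩, by positivity, ?_⟩ <;> nlinarith
  · have hcombo := (convex_convexHull ℝ T).sum_mem (t := Finset.univ)
      (w := ![1 - x 0 - x 1, x 0, x 1])
      (z := ![0, EuclideanSpace.single 0 1, EuclideanSpace.single 1 1]) ?_ ?_ ?_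
    · convert hcombo using 1
      ext i; fin_cases i <;> simp [Fin.sum_univ_three]
    · intro i _; fin_cases i <;> simp <;> linarith
    · simp [Fin.sum_univ_three]; ring
    · intro i _; apply subset_convexHull; fin_cases i <;> simp [T]

lemma norm_sq_mul_norm_sq_sub_inner_sq (p q : EuclideanSpace ℝ (Fin 2)) :
    ‖p‖ ^ 2 * ‖q‖ ^ 2 - inner ℝ p q ^ 2 = (p 0 * q 1 - q 0 * p 1) ^ 2 := by
  simp only [EuclideanSpace.norm_sq_eq, EuclideanSpace.inner_eq_star_dotProduct, dotProduct,
    Fin.sum_univ_two, Real.norm_eq_abs, sq_abs, star_trivial]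
  ring

lemma volume_convexHull_triple (A B C : EuclideanSpace ℝ (Fin 2)) :
    (volume (convexHull ℝ {A, B, C})).toReal
      = √(‖B - A‖ ^ 2 * ‖C - A‖ ^ 2 - inner ℝ (B - A) (C - A) ^ 2) / 2 := by
  set p := B - A
  set q := C - A
  let L := Matrix.toEuclideanLin !![p 0, q 0; p 1, q 1]
  have hL0 : L (EuclideanSpace.single 0 1) = p := by
    ext i; fin_cases i <;> simp [L, Matrix.toLpLin_apply]
  have hL1 : L (EuclideanSpace.single 1 1) = q := by
    ext i; fin_cases i <;> simp [L, Matrix.toLpLin_apply]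
  have hhull : convexHull ℝ {A, B, C}
      = A +ᵥ L '' convexHull ℝ {0, EuclideanSpace.single 0 1, EuclideanSpace.single 1 1} := by
    rw [L.image_convexHull, ← convexHull_vadd, image_insert_eq, image_insert_eq, image_singleton,
      map_zero, hL0, hL1, vadd_set_insert, vadd_set_insert, vadd_set_singleton]
    simp [p, q]
  rw [hhull, measure_vadd, Measure.addHaar_image_linearMap, LinearMap.det_toLpLin,
    Matrix.det_fin_two_of, convexHull_zero_single_single, volume_triangle_euclidean,
    ← ENNReal.ofReal_mul (abs_nonneg _), ENNReal.toReal_ofReal (by positivity),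
    norm_sq_mul_norm_sq_sub_inner_sq, sqrt_sq_eq_abs]
  ring

end Area

/-- `a, b, c` are the sides `BC, CA, AB` and `u, v, w` the inner products of the edge vectors at
`A, B, C`. -/
lemma inradius_lt_orthic_perimeter_div_four_of_sides {a b c u v w : ℝ} (ha : 0 < a)
    (hb : 0 < b) (hc : 0 < c) (hu : 0 < u) (hv : 0 < v) (hw : 0 < w) (ha2 : a ^ 2 = v + w)
    (hb2 : b ^ 2 = w + u) (hc2 : c ^ 2 = u + v) :
    √(c ^ 2 * b ^ 2 - u ^ 2) / 2 / ((c + a + b) / 2)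
      < (w * c / (b * a) + u * a / (c * b) + v * b / (a * c)) / 4 := by
  set K := u * v + v * w + w * u
  have hK : 0 < K := by positivity
  have harea : c ^ 2 * b ^ 2 - u ^ 2 = K := by rw [hb2, hc2]; ring
  have hperim :
      (w * c / (b * a) + u * a / (c * b) + v * b / (a * c)) / 4 = K / (2 * (a * b * c)) := by
    field_simp
    linear_combination 2 * u * ha2 + 2 * v * hb2 + 2 * w * hc2
  have hsides : 2 * (a ^ 2 + b ^ 2 + c ^ 2) < (a + b + c) ^ 2 := by
    have : a < b + c := by nlinarith
    have : b < c + a := by nlinarith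
    have : c < a + b := by nlinarith
    nlinarith
  have hcore : 4 * (a * b * c) ^ 2 < K * (a + b + c) ^ 2 :=
    calc 4 * (a * b * c) ^ 2 = 4 * ((u + v + w) * K - u * v * w) := by
          rw [mul_pow, mul_pow, ha2, hb2, hc2]; ring
      _ < 2 * (a ^ 2 + b ^ 2 + c ^ 2) * K := by
          rw [ha2, hb2, hc2]; nlinarith [mul_pos (mul_pos hu hv) hw]
      _ < K * (a + b + c) ^ 2 := by nlinarith
  have hsqrt : 2 * (a * b * c) < √K * (a + b + c) := by
    apply lt_of_pow_lt_pow_left₀ 2 (by positivity)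
    rw [mul_pow √K, sq_sqrt hK.le]
    linarith
  rw [harea, hperim, div_div, div_lt_div_iff₀ (by positivity) (by positivity)]
  nlinarith [sq_sqrt hK.le, sqrt_pos.2 hK]

theorem stmt_10_general (A B C HA HB HC : EuclideanSpace ℝ (Fin 2)) (s S r y : ℝ)
    (hacuteA : ∠ B A C < π / 2)
    (hacuteB : ∠ A B C < π / 2)
    (hacuteC : ∠ A C B < π / 2)
    -- `HA`, `HB`, `HC` are the feet of the altitudes from `A`, `B`, `C`
    (hHAmem : HA ∈ affineSpan ℝ ({B, C} : Set (EuclideanSpace ℝ (Fin 2))))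
    (hHAperp : inner ℝ (A - HA) (B - C) = (0 : ℝ))
    (hHBmem : HB ∈ affineSpan ℝ ({C, A} : Set (EuclideanSpace ℝ (Fin 2))))
    (hHBperp : inner ℝ (B - HB) (C - A) = (0 : ℝ))
    (hHCmem : HC ∈ affineSpan ℝ ({A, B} : Set (EuclideanSpace ℝ (Fin 2))))
    (hHCperp : inner ℝ (C - HC) (A - B) = (0 : ℝ))
    (hs : s = (dist A B + dist B C + dist C A) / 2)
    (hS : S = (volume (convexHull ℝ ({A, B, C} : Set (EuclideanSpace ℝ (Fin 2))))).toReal)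
    (hr : r = S / s)
    (hy : y = dist HA HB + dist HB HC + dist HC HA) :
    r < y / 4 := by
  have hu : 0 < inner ℝ (B - A) (C - A) :=
    InnerProductGeometry.inner_pos_of_angle_lt_pi_div_two hacuteA
  have hv : 0 < inner ℝ (C - B) (A - B) :=
    real_inner_comm (A - B) (C - B) ▸ InnerProductGeometry.inner_pos_of_angle_lt_pi_div_two hacuteB
  have hw : 0 < inner ℝ (A - C) (B - C) :=
    InnerProductGeometry.inner_pos_of_angle_lt_pi_div_two hacuteC
  have ha2 := dist_sq_eq_inner_add_inner A B C
  have hb2 := dist_sq_eq_inner_add_inner B C A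
  have hc2 := dist_sq_eq_inner_add_inner C A B
  have ha : 0 < dist B C := by nlinarith [dist_nonneg (x := B) (y := C)]
  have hb : 0 < dist C A := by nlinarith [dist_nonneg (x := C) (y := A)]
  have hc : 0 < dist A B := by nlinarith [dist_nonneg (x := A) (y := B)]
  rw [hr, hS, volume_convexHull_triple, hs, hy,
    dist_feet_of_altitudes hHAmem hHAperp hHBmem hHBperp (dist_pos.1 hb) (dist_pos.1 ha).symm,
    dist_feet_of_altitudes hHBmem hHBperp hHCmem hHCperp (dist_pos.1 hc) (dist_pos.1 hb).symm,
    dist_feet_of_altitudes hHCmem hHCperp hHAmem hHAperp (dist_pos.1 ha) (dist_pos.1 hc).symm,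
    abs_of_pos hu, abs_of_pos hv, abs_of_pos hw, ← dist_eq_norm, ← dist_eq_norm,
    dist_comm B A, dist_comm C B, dist_comm A C]
  exact inradius_lt_orthic_perimeter_div_four_of_sides ha hb hc hu hv hw ha2 hb2 hc2

/-- Claim 1: for an acute triangle with inradius `r`, the perimeter `y` of its orthic
(pedal) triangle satisfies `r < y/4`. -/
theorem stmt_10 (A B C HA HB HC : EuclideanSpace ℝ (Fin 2)) (s S r y : ℝ)
    (hind : AffineIndependent ℝ ![A, B, C])
    (hacuteA : ∠ B A C < π / 2)
    (hacuteB : ∠ A B C < π / 2)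
    (hacuteC : ∠ A C B < π / 2)
    -- `HA`, `HB`, `HC` are the feet of the altitudes from `A`, `B`, `C`
    (hHAmem : HA ∈ affineSpan ℝ ({B, C} : Set (EuclideanSpace ℝ (Fin 2))))
    (hHAperp : inner ℝ (A - HA) (B - C) = (0 : ℝ))
    (hHBmem : HB ∈ affineSpan ℝ ({C, A} : Set (EuclideanSpace ℝ (Fin 2))))
    (hHBperp : inner ℝ (B - HB) (C - A) = (0 : ℝ))
    (hHCmem : HC ∈ affineSpan ℝ ({A, B} : Set (EuclideanSpace ℝ (Fin 2))))
    (hHCperp : inner ℝ (C - HC) (A - B) = (0 : ℝ))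
    (hs : s = (dist A B + dist B C + dist C A) / 2)
    (hS : S = (volume (convexHull ℝ ({A, B, C} : Set (EuclideanSpace ℝ (Fin 2))))).toReal)
    (hr : r = S / s)
    (hy : y = dist HA HB + dist HB HC + dist HC HA) :
    r < y / 4 :=
  stmt_10_general A B C HA HB HC s S r y hacuteA hacuteB hacuteC hHAmem hHAperp hHBmem hHBperp
    hHCmem hHCperp hs hS hr hy
end

section
/- Let A, B, C be three affinely independent points in ℝ² such that the interior angle of the triangle at A is strictly greater than π/2, and let h = dist(A, line BC). Then every closed rectifiable curve in ℝ² whose image intersects each of the three lines through B and C, through C and A, and through A and B has length at least 2h. -/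
open Set Metric MeasureTheory Real EuclideanGeometry
open scoped RealInnerProductSpace

/-!
Let `H` be the foot of the altitude from `A` and `w = A - H`, so `‖w‖ = h`. Write the visited
points as `P = A + t (B - A)` on `AB`, `Q = A + r (C - A)` on `AC` and `R` on `BC`. Projecting
onto `w` gives `|RP| ≥ h |1 - t|` and `|QR| ≥ h |1 - r|`, while the obtuse angle at `A`, in the
form `⟪B - H, C - H⟫ ≤ -h²`, gives `|PQ| ≥ h |t + r|`; these add up to at least `2h`. Finally a
closed curve through `P`, `Q`, `R` is at least as long as the triangle `PQR`.
-/

theorem two_le_abs_add_abs_sub_add_abs_sub (t r : ℝ) : 2 ≤ |t + r| + |1 - t| + |1 - r| :=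
  calc (2 : ℝ) = |(t + r) + (1 - t) + (1 - r)| := by
        rw [show (t + r) + (1 - t) + (1 - r) = 2 by ring, abs_two]
    _ ≤ |t + r| + |1 - t| + |1 - r| := abs_add_three _ _ _

section InnerProductSpace

variable {V : Type*} [NormedAddCommGroup V] [InnerProductSpace ℝ V]

theorem InnerProductGeometry.inner_nonpos_of_pi_div_two_le_angle {x y : V}
    (h : π / 2 ≤ InnerProductGeometry.angle x y) : ⟪x, y⟫ ≤ 0 := by
  rw [← InnerProductGeometry.cos_angle_mul_norm_mul_norm]
  exact mul_nonpos_of_nonpos_of_nonneg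
    (cos_nonpos_of_pi_div_two_le_of_le h (by linarith [InnerProductGeometry.angle_le_pi x y]))
    (by positivity)

theorem mul_abs_le_norm_of_inner_eq {u w : V} {c : ℝ} (h : ⟪u, w⟫ = c * ‖w‖ ^ 2) :
    ‖w‖ * |c| ≤ ‖u‖ := by
  rcases (norm_nonneg w).eq_or_lt with hw | hw
  · rw [← hw, zero_mul]; exact norm_nonneg u
  · have := abs_real_inner_le_norm u w
    rw [h, abs_mul, abs_of_nonneg (sq_nonneg ‖w‖)] at this
    nlinarith

theorem mul_abs_add_le_norm_smul_sub_smul {x y w : V} (t r : ℝ) (hxw : ⟪x, w⟫ = 0)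
    (hyw : ⟪y, w⟫ = 0) (hxy : ⟪x, y⟫ ≤ -‖w‖ ^ 2) :
    ‖w‖ * |t + r| ≤ ‖t • (x - w) - r • (y - w)‖ := by
  set v := t • x - r • y
  have hsplit : ‖t • (x - w) - r • (y - w)‖ ^ 2 = ‖v‖ ^ 2 + (t - r) ^ 2 * ‖w‖ ^ 2 := by
    have hvw : ⟪v, (t - r) • w⟫ = 0 := by
      simp only [v, inner_sub_left, real_inner_smul_left, real_inner_smul_right, hxw, hyw]
      ring
    rw [show t • (x - w) - r • (y - w) = v - (t - r) • w by module, norm_sub_sq_real, hvw,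
      norm_smul, mul_pow, Real.norm_eq_abs, sq_abs]
    ring
  -- `‖t x - r y‖² = ‖t x + r y‖² - 4 t r ⟪x, y⟫`, and `⟪x, y⟫ ≤ -‖w‖²` handles the case `t r ≥ 0`
  have hv : 4 * (t * r) * ‖w‖ ^ 2 ≤ ‖v‖ ^ 2 := by
    have hpar : ‖v‖ ^ 2 = ‖t • x + r • y‖ ^ 2 - 4 * (t * r) * ⟪x, y⟫ := by
      simp only [v, norm_sub_sq_real, norm_add_sq_real, real_inner_smul_left,
        real_inner_smul_right]
      ring
    rcases le_total 0 (t * r) with htr | htr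
    · nlinarith [mul_le_mul_of_nonneg_left hxy htr, sq_nonneg ‖t • x + r • y‖]
    · nlinarith [sq_nonneg ‖v‖, sq_nonneg ‖w‖]
  rw [← abs_norm w, ← abs_mul]
  exact abs_le_of_sq_le_sq (by rw [hsplit]; linear_combination hv) (norm_nonneg _)

theorem mul_abs_one_sub_le_dist_lineMap {A B H R : V} (t : ℝ) (hB : ⟪B - H, A - H⟫ = 0)
    (hR : ⟪R - H, A - H⟫ = 0) : ‖A - H‖ * |1 - t| ≤ dist (AffineMap.lineMap A B t) R := by
  rw [dist_eq_norm, AffineMap.lineMap_apply_module']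
  refine mul_abs_le_norm_of_inner_eq ?_
  rw [show t • (B - A) + A - R = t • (B - H) + (1 - t) • (A - H) - (R - H) by module,
    inner_sub_left, inner_add_left, real_inner_smul_left, real_inner_smul_left, hB, hR,
    real_inner_self_eq_norm_sq]
  ring

theorem two_mul_norm_le_dist_add_dist_add_dist {A B C H P Q R : V}
    (hB : ⟪B - H, A - H⟫ = 0) (hC : ⟪C - H, A - H⟫ = 0) (hR : ⟪R - H, A - H⟫ = 0)
    (hA : ⟪B - A, C - A⟫ ≤ 0) (hP : P ∈ line[ℝ, A, B]) (hQ : Q ∈ line[ℝ, A, C]) :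
    2 * ‖A - H‖ ≤ dist P Q + dist Q R + dist R P := by
  obtain ⟨t, rfl⟩ := mem_affineSpan_pair_iff_exists_lineMap_eq.1 hP
  obtain ⟨r, rfl⟩ := mem_affineSpan_pair_iff_exists_lineMap_eq.1 hQ
  have hBC : ⟪B - H, C - H⟫ ≤ -‖A - H‖ ^ 2 := by
    have : ⟪(B - H) - (A - H), (C - H) - (A - H)⟫ = ⟪B - H, C - H⟫ + ‖A - H‖ ^ 2 := by
      rw [inner_sub_left, inner_sub_right (B - H), inner_sub_right (A - H),
        real_inner_self_eq_norm_sq, ← real_inner_comm (A - H) (C - H), hB, hC]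
      ring
    rw [sub_sub_sub_cancel_right, sub_sub_sub_cancel_right] at this
    linarith
  have hPQ : ‖A - H‖ * |t + r| ≤ dist (AffineMap.lineMap A B t) (AffineMap.lineMap A C r) := by
    rw [dist_eq_norm, AffineMap.lineMap_apply_module', AffineMap.lineMap_apply_module',
      show t • (B - A) + A - (r • (C - A) + A) =
        t • ((B - H) - (A - H)) - r • ((C - H) - (A - H)) by module]
    exact mul_abs_add_le_norm_smul_sub_smul t r hB hC hBC
  have hRP := mul_abs_one_sub_le_dist_lineMap t hB hR
  have hQR := mul_abs_one_sub_le_dist_lineMap r hC hR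
  rw [dist_comm R]
  calc 2 * ‖A - H‖ ≤ ‖A - H‖ * (|t + r| + |1 - t| + |1 - r|) := by
        linarith [mul_le_mul_of_nonneg_left (two_le_abs_add_abs_sub_add_abs_sub t r)
          (norm_nonneg (A - H))]
    _ ≤ _ := by linarith

theorem two_mul_infDist_le_dist_add_dist_add_dist {A B C P Q R : V} (hA : π / 2 ≤ ∠ B A C)
    (hP : P ∈ line[ℝ, A, B]) (hQ : Q ∈ line[ℝ, C, A]) (hR : R ∈ line[ℝ, B, C]) :
    2 * infDist A (line[ℝ, B, C] : Set V) ≤ dist P Q + dist Q R + dist R P := by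
  have : Nonempty line[ℝ, B, C] := ⟨⟨B, left_mem_affineSpan_pair ℝ B C⟩⟩
  set H : V := (orthogonalProjection line[ℝ, B, C] A : V)
  have hperp : ∀ X ∈ line[ℝ, B, C], ⟪X - H, A - H⟫ = 0 := fun X hX =>
    Submodule.inner_right_of_mem_orthogonal
      (AffineSubspace.vsub_mem_direction hX (orthogonalProjection_mem A))
      (vsub_orthogonalProjection_mem_direction_orthogonal _ A)
  rw [← dist_orthogonalProjection_eq_infDist, dist_eq_norm]
  exact two_mul_norm_le_dist_add_dist_add_dist (hperp B (left_mem_affineSpan_pair ℝ B C))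
    (hperp C (right_mem_affineSpan_pair ℝ B C)) (hperp R hR)
    (InnerProductGeometry.inner_nonpos_of_pi_div_two_le_angle hA) hP
    (by rwa [Set.pair_comm] at hQ)

end InnerProductSpace

section ClosedCurve

variable {α E : Type*} [LinearOrder α] [PseudoEMetricSpace E] {f : α → E} {a b : α}

theorem eVariationOn.edist_add_edist_add_edist_le_of_le (hf : f a = f b) {x y z : α}
    (hax : a ≤ x) (hxy : x ≤ y) (hyz : y ≤ z) (hzb : z ≤ b) :
    edist (f x) (f y) + edist (f y) (f z) + edist (f z) (f x) ≤ eVariationOn f (Icc a b) := by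
  have hvar (u v : α) (huv : u ≤ v) : edist (f u) (f v) ≤ eVariationOn f (Icc u v) :=
    eVariationOn.edist_le f (left_mem_Icc.2 huv) (right_mem_Icc.2 huv)
  have hsplit {u v w : α} (huv : u ≤ v) (hvw : v ≤ w) :
      eVariationOn f (Icc u v) + eVariationOn f (Icc v w) = eVariationOn f (Icc u w) := by
    simpa only [univ_inter] using eVariationOn.Icc_add_Icc f huv hvw (mem_univ v)
  calc edist (f x) (f y) + edist (f y) (f z) + edist (f z) (f x)
      ≤ eVariationOn f (Icc x y) + eVariationOn f (Icc y z) +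
          (eVariationOn f (Icc z b) + eVariationOn f (Icc a x)) := by
        gcongr
        · exact hvar x y hxy
        · exact hvar y z hyz
        · calc edist (f z) (f x) ≤ edist (f z) (f b) + edist (f a) (f x) :=
                hf ▸ edist_triangle _ _ _
            _ ≤ _ := add_le_add (hvar z b hzb) (hvar a x hax)
    _ = eVariationOn f (Icc a b) := by
        rw [← hsplit (hax.trans (hxy.trans hyz)) hzb, ← hsplit (hax.trans hxy) hyz,
          ← hsplit hax hxy]
        ac_rfl

theorem eVariationOn.edist_add_edist_add_edist_le (hf : f a = f b) {x y z : α}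
    (hx : x ∈ Icc a b) (hy : y ∈ Icc a b) (hz : z ∈ Icc a b) :
    edist (f x) (f y) + edist (f y) (f z) + edist (f z) (f x) ≤ eVariationOn f (Icc a b) := by
  wlog hxy : x ≤ y generalizing x y z
  · convert this hy hx hz (le_of_not_ge hxy) using 1
    rw [edist_comm (f y) (f x), edist_comm (f x) (f z), edist_comm (f z) (f y)]
    ac_rfl
  wlog hxz : x ≤ z generalizing x y z
  · convert this hz hx hy (le_of_not_ge hxz) ((le_of_not_ge hxz).trans hxy) using 1
    ac_rfl
  rcases le_total y z with hyz | hzy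
  · exact edist_add_edist_add_edist_le_of_le hf hx.1 hxy hyz hz.2
  · convert edist_add_edist_add_edist_le_of_le hf hx.1 hxz hzy hy.2 using 1
    rw [edist_comm (f y) (f x), edist_comm (f x) (f z), edist_comm (f z) (f y)]
    ac_rfl

end ClosedCurve

theorem stmt_12_general (A B C : EuclideanSpace ℝ (Fin 2)) (h : ℝ)
    (hobtuse : π / 2 < ∠ B A C)
    (hh : h = infDist A (affineSpan ℝ ({B, C} : Set (EuclideanSpace ℝ (Fin 2))) :
      Set (EuclideanSpace ℝ (Fin 2))))
    (γ : ℝ → EuclideanSpace ℝ (Fin 2))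
    (hclosed : γ 0 = γ 1)
    (hBC : ((γ '' Icc 0 1) ∩
      (affineSpan ℝ ({B, C} : Set (EuclideanSpace ℝ (Fin 2))) :
        Set (EuclideanSpace ℝ (Fin 2)))).Nonempty)
    (hCA : ((γ '' Icc 0 1) ∩
      (affineSpan ℝ ({C, A} : Set (EuclideanSpace ℝ (Fin 2))) :
        Set (EuclideanSpace ℝ (Fin 2)))).Nonempty)
    (hAB : ((γ '' Icc 0 1) ∩
      (affineSpan ℝ ({A, B} : Set (EuclideanSpace ℝ (Fin 2))) :
        Set (EuclideanSpace ℝ (Fin 2)))).Nonempty) :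
    ENNReal.ofReal (2 * h) ≤ eVariationOn γ (Icc 0 1) := by
  obtain ⟨_, ⟨x, hx, rfl⟩, hxBC⟩ := hBC
  obtain ⟨_, ⟨y, hy, rfl⟩, hyCA⟩ := hCA
  obtain ⟨_, ⟨z, hz, rfl⟩, hzAB⟩ := hAB
  calc ENNReal.ofReal (2 * h)
      ≤ ENNReal.ofReal (dist (γ z) (γ y) + dist (γ y) (γ x) + dist (γ x) (γ z)) :=
        ENNReal.ofReal_le_ofReal
          (hh ▸ two_mul_infDist_le_dist_add_dist_add_dist hobtuse.le hzAB hyCA hxBC)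
    _ = edist (γ z) (γ y) + edist (γ y) (γ x) + edist (γ x) (γ z) := by
        simp only [edist_dist, ENNReal.ofReal_add, dist_nonneg, add_nonneg]
    _ ≤ eVariationOn γ (Icc 0 1) := eVariationOn.edist_add_edist_add_edist_le hclosed hz hy hx

/-- For an obtuse triangle (obtuse at `A`), every closed rectifiable curve visiting the
three side lines has length at least `2h`, where `h` is the altitude from `A`. -/
theorem stmt_12 (A B C : EuclideanSpace ℝ (Fin 2)) (h : ℝ)
    (hind : AffineIndependent ℝ ![A, B, C])
    (hobtuse : π / 2 < ∠ B A C)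
    (hh : h = infDist A (affineSpan ℝ ({B, C} : Set (EuclideanSpace ℝ (Fin 2))) :
      Set (EuclideanSpace ℝ (Fin 2))))
    (γ : ℝ → EuclideanSpace ℝ (Fin 2))
    (hcont : ContinuousOn γ (Icc 0 1))
    (hclosed : γ 0 = γ 1)
    (hBC : ((γ '' Icc 0 1) ∩
      (affineSpan ℝ ({B, C} : Set (EuclideanSpace ℝ (Fin 2))) :
        Set (EuclideanSpace ℝ (Fin 2)))).Nonempty)
    (hCA : ((γ '' Icc 0 1) ∩
      (affineSpan ℝ ({C, A} : Set (EuclideanSpace ℝ (Fin 2))) :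
        Set (EuclideanSpace ℝ (Fin 2)))).Nonempty)
    (hAB : ((γ '' Icc 0 1) ∩
      (affineSpan ℝ ({A, B} : Set (EuclideanSpace ℝ (Fin 2))) :
        Set (EuclideanSpace ℝ (Fin 2)))).Nonempty) :
    ENNReal.ofReal (2 * h) ≤ eVariationOn γ (Icc 0 1) :=
  stmt_12_general A B C h hobtuse hh γ hclosed hBC hCA hAB
end

section
/- Let A, B, C be three affinely independent points in ℝ² forming an acute triangle, and let y be the perimeter of its orthic (pedal) triangle. Then every closed rectifiable curve in ℝ² whose image intersects each of the three lines through B and C, through C and A, and through A and B has length at least y. -/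
/-!
At the foot `HA` of the altitude from `A`, the two sides of the orthic triangle make the same
angle `A` with the line `BC`: the feet `HA`, `HC` are the images of `C`, `A` under the inversion
centred at `B` with radius² `⟪A - B, C - B⟫`, so the triangle `B HA HC` is similar to `BAC`.
So the orthic triangle obeys the law of reflection at each of its vertices. If `e₁, e₂, e₃` are
the unit vectors along its sides, then for `P, Q, R` on the three side lines
`|PQ| + |QR| + |RP| ≥ ⟪e₁, Q - P⟫ + ⟪e₂, R - Q⟫ + ⟪e₃, P - R⟫`, and by the reflection law the
right-hand side does not change when `P, Q, R` move along their lines; at the feet it is `y`.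
A closed curve through `P`, `Q` and `R` is at least as long as the triangle `PQR`.
-/

open Set Real EuclideanGeometry
open scoped InnerProductSpace

section InnerProductSpace

variable {V : Type*} [NormedAddCommGroup V] [InnerProductSpace ℝ V]

lemma InnerProductGeometry.inner_pos_of_angle_lt_pi_div_two_s13 {x y : V} (h : angle x y < π / 2) :
    0 < ⟪x, y⟫_ℝ := by
  rw [angle, arccos_lt_pi_div_two] at h
  by_contra! hxy
  exact h.not_ge (div_nonpos_of_nonpos_of_nonneg hxy (by positivity))

lemma real_inner_inv_norm_smul_left (x y : V) :
    ⟪‖x‖⁻¹ • x, y⟫_ℝ = cos (InnerProductGeometry.angle x y) * ‖y‖ := by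
  rcases eq_or_ne x 0 with rfl | hx
  · simp
  rw [real_inner_smul_left, ← InnerProductGeometry.cos_angle_mul_norm_mul_norm]
  field_simp [norm_ne_zero_iff.2 hx]

lemma real_inner_inv_norm_smul_self (x : V) : ⟪‖x‖⁻¹ • x, x⟫_ℝ = ‖x‖ := by
  rcases eq_or_ne x 0 with rfl | hx
  · simp
  rw [real_inner_smul_left, real_inner_self_eq_norm_sq]
  field_simp [norm_ne_zero_iff.2 hx]

lemma real_inner_inv_norm_smul_le_norm (x y : V) : ⟪‖x‖⁻¹ • x, y⟫_ℝ ≤ ‖y‖ := by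
  refine (real_inner_le_norm _ _).trans (mul_le_of_le_one_left (norm_nonneg _) ?_)
  rw [norm_smul, norm_inv, norm_norm]
  exact inv_mul_le_one_of_le₀ le_rfl (norm_nonneg _)

def IsAltitudeFoot (A B C H : V) : Prop :=
  H ∈ line[ℝ, B, C] ∧ ⟪A - H, B - C⟫_ℝ = 0

namespace IsAltitudeFoot

variable {A B C H : V}

lemma swap (h : IsAltitudeFoot A B C H) : IsAltitudeFoot A C B H :=
  ⟨Set.pair_comm B C ▸ h.1, by rw [← neg_sub B C, inner_neg_right, h.2, neg_zero]⟩

lemma sub_eq_smul (h : IsAltitudeFoot A B C H) :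
    H - B = (⟪A - B, C - B⟫_ℝ / ‖C - B‖ ^ 2) • (C - B) := by
  obtain ⟨t, ht⟩ := vadd_left_mem_affineSpan_pair.1 (show (H - B) +ᵥ B ∈ line[ℝ, B, C] by
    simpa using h.1)
  rw [vsub_eq_sub] at ht
  rcases eq_or_ne C B with rfl | hCB
  · rw [← ht]; simp
  have hperp : ⟪A - B, C - B⟫_ℝ = t * ‖C - B‖ ^ 2 := by
    have := h.2
    rw [← neg_sub C B, inner_neg_right, neg_eq_zero, show A - H = A - B - (H - B) by abel, ← ht,
      inner_sub_left, real_inner_smul_left, real_inner_self_eq_norm_sq] at this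
    linarith
  rw [← ht, hperp, mul_div_cancel_right₀ _ (by simpa [sub_eq_zero] using hCB)]

lemma eq_inversion (h : IsAltitudeFoot A B C H) (hB : 0 ≤ ⟪A - B, C - B⟫_ℝ) :
    H = inversion B √⟪A - B, C - B⟫_ℝ C := by
  rw [inversion, div_pow, sq_sqrt hB, vsub_eq_sub, vadd_eq_add, dist_eq_norm,
    ← h.sub_eq_smul, sub_add_cancel]

end IsAltitudeFoot

lemma angle_sub_altitudeFoot {A B C HA HC : V} (hB : 0 < ⟪A - B, C - B⟫_ℝ)
    (hHA : IsAltitudeFoot A B C HA) (hHC : IsAltitudeFoot C B A HC) :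
    InnerProductGeometry.angle (HC - HA) (B - C) = ∠ B A C := by
  have hAB : A ≠ B := by rintro rfl; simp at hB
  have hCB : C ≠ B := by rintro rfl; simp at hB
  have hu : ‖A - B‖ ≠ 0 := norm_ne_zero_iff.2 (sub_ne_zero.2 hAB)
  have hv : ‖C - B‖ ≠ 0 := norm_ne_zero_iff.2 (sub_ne_zero.2 hCB)
  have hinner : ⟪HC - HA, B - C⟫_ℝ = ⟪A - B, C - B⟫_ℝ / ‖A - B‖ ^ 2 * ⟪B - A, C - A⟫_ℝ := by
    rw [show HC - HA = (HC - B) - (HA - B) by abel, hHC.sub_eq_smul, hHA.sub_eq_smul,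
      show B - C = -(C - B) by abel, show B - A = -(A - B) by abel,
      show C - A = (C - B) - (A - B) by abel, real_inner_comm (A - B) (C - B)]
    generalize A - B = u at *
    generalize C - B = v at *
    simp only [inner_sub_left, inner_sub_right, inner_neg_right, inner_neg_left,
      real_inner_smul_left, real_inner_self_eq_norm_sq]
    field_simp
    ring
  have hdist : ‖HC - HA‖ = ⟪A - B, C - B⟫_ℝ / (‖A - B‖ * ‖C - B‖) * ‖A - C‖ := by
    rw [hHA.eq_inversion hB.le, hHC.eq_inversion (real_inner_comm (A - B) _ ▸ hB.le),
      real_inner_comm, ← dist_eq_norm, dist_inversion_inversion hAB hCB,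
      sq_sqrt hB.le, dist_eq_norm, dist_eq_norm, dist_eq_norm]
  rcases eq_or_ne A C with rfl | hAC
  · simp [hinner, EuclideanGeometry.angle, InnerProductGeometry.angle]
  rw [EuclideanGeometry.angle, InnerProductGeometry.angle, InnerProductGeometry.angle, hinner,
    hdist, vsub_eq_sub, vsub_eq_sub, norm_sub_rev B A, norm_sub_rev B C, norm_sub_rev C A]
  congr 1
  field_simp [norm_ne_zero_iff.2 (sub_ne_zero.2 hAC), hB.ne']

/-- The path `b → a → c` obeys the law of reflection in the mirror `L`. -/
def ReflectsOff (L : AffineSubspace ℝ V) (b a c : V) : Prop :=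
  ∀ v ∈ L.direction, ⟪‖b - a‖⁻¹ • (b - a) + ‖c - a‖⁻¹ • (c - a), v⟫_ℝ = 0

lemma reflectsOff_altitudeFoot {A B C HA HB HC : V}
    (hB : 0 < ⟪C - B, A - B⟫_ℝ) (hC : 0 < ⟪A - C, B - C⟫_ℝ)
    (hHA : IsAltitudeFoot A B C HA) (hHB : IsAltitudeFoot B C A HB)
    (hHC : IsAltitudeFoot C A B HC) :
    ReflectsOff line[ℝ, B, C] HB HA HC := by
  intro v hv
  rw [direction_affineSpan] at hv
  obtain ⟨t, rfl⟩ := mem_vectorSpan_pair.1 hv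
  have hAB := angle_sub_altitudeFoot (real_inner_comm (A - B) _ ▸ hB) hHA hHC.swap
  have hAC := angle_sub_altitudeFoot hC hHA.swap hHB
  rw [vsub_eq_sub, inner_smul_right, inner_add_left, real_inner_inv_norm_smul_left,
    real_inner_inv_norm_smul_left, hAB, ← neg_sub C B, InnerProductGeometry.angle_neg_right, hAC,
    angle_comm, cos_pi_sub, norm_neg]
  ring

lemma dist_add_dist_add_dist_le_of_reflectsOff {L₁ L₂ L₃ : AffineSubspace ℝ V} {a b c p q r : V}
    (ha : a ∈ L₁) (hb : b ∈ L₂) (hc : c ∈ L₃) (hp : p ∈ L₁) (hq : q ∈ L₂) (hr : r ∈ L₃)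
    (h₁ : ReflectsOff L₁ b a c) (h₂ : ReflectsOff L₂ c b a) (h₃ : ReflectsOff L₃ a c b) :
    dist a b + dist b c + dist c a ≤ dist p q + dist q r + dist r p := by
  have hflip (x y : V) : ‖x - y‖⁻¹ • (x - y) = -(‖y - x‖⁻¹ • (y - x)) := by
    rw [norm_sub_rev, ← smul_neg, neg_sub]
  have hdist (x y : V) : dist x y = ⟪‖y - x‖⁻¹ • (y - x), y - x⟫_ℝ := by
    rw [real_inner_inv_norm_smul_self, dist_comm, dist_eq_norm]
  have hle (x y w : V) : ⟪‖w‖⁻¹ • w, y - x⟫_ℝ ≤ dist x y := by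
    rw [dist_comm, dist_eq_norm]
    exact real_inner_inv_norm_smul_le_norm _ _
  have ha' := h₁ (p - a) (L₁.vsub_mem_direction hp ha)
  have hb' := h₂ (q - b) (L₂.vsub_mem_direction hq hb)
  have hc' := h₃ (r - c) (L₃.vsub_mem_direction hr hc)
  rw [hflip c a] at ha'
  rw [hflip a b] at hb'
  rw [hflip b c] at hc'
  set e₁ := ‖b - a‖⁻¹ • (b - a)
  set e₂ := ‖c - b‖⁻¹ • (c - b)
  set e₃ := ‖a - c‖⁻¹ • (a - c)
  calc dist a b + dist b c + dist c a = ⟪e₁, b - a⟫_ℝ + ⟪e₂, c - b⟫_ℝ + ⟪e₃, a - c⟫_ℝ := by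
        rw [hdist a b, hdist b c, hdist c a]
    _ = ⟪e₁, q - p⟫_ℝ + ⟪e₂, r - q⟫_ℝ + ⟪e₃, p - r⟫_ℝ := by
        simp only [inner_add_left, inner_neg_left, inner_sub_right] at ha' hb' hc' ⊢
        linarith
    _ ≤ dist p q + dist q r + dist r p := by
        gcongr <;> apply hle

end InnerProductSpace

section BoundedVariation

variable {α E : Type*} [LinearOrder α] [PseudoEMetricSpace E]

lemma edist_add_edist_add_edist_le_eVariationOn_of_le {f : α → E} {s t a b c : α}
    (hf : f s = f t) (hsa : s ≤ a) (hab : a ≤ b) (hbc : b ≤ c) (hct : c ≤ t) :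
    edist (f a) (f b) + edist (f b) (f c) + edist (f c) (f a) ≤ eVariationOn f (Icc s t) := by
  have hV {x y z : α} (hxy : x ≤ y) (hyz : y ≤ z) :
      eVariationOn f (Icc x y) + eVariationOn f (Icc y z) = eVariationOn f (Icc x z) := by
    simpa only [univ_inter] using eVariationOn.Icc_add_Icc f hxy hyz (mem_univ _)
  have hca : edist (f c) (f a) ≤ eVariationOn f (Icc c t) + eVariationOn f (Icc s a) :=
    calc edist (f c) (f a) ≤ edist (f c) (f t) + edist (f s) (f a) := hf ▸ edist_triangle _ _ _
      _ ≤ _ := add_le_add (eVariationOn.edist_le f (left_mem_Icc.2 hct) (right_mem_Icc.2 hct))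
          (eVariationOn.edist_le f (left_mem_Icc.2 hsa) (right_mem_Icc.2 hsa))
  calc _ ≤ eVariationOn f (Icc a b) + eVariationOn f (Icc b c)
        + (eVariationOn f (Icc c t) + eVariationOn f (Icc s a)) := by
        gcongr
        · exact eVariationOn.edist_le f (left_mem_Icc.2 hab) (right_mem_Icc.2 hab)
        · exact eVariationOn.edist_le f (left_mem_Icc.2 hbc) (right_mem_Icc.2 hbc)
    _ = eVariationOn f (Icc s t) := by
        rw [← hV hsa (hab.trans hbc |>.trans hct), ← hV hab (hbc.trans hct), ← hV hbc hct]
        ac_rfl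

lemma edist_add_edist_add_edist_le_eVariationOn {f : α → E} {s t a b c : α} (hf : f s = f t)
    (ha : a ∈ Icc s t) (hb : b ∈ Icc s t) (hc : c ∈ Icc s t) :
    edist (f a) (f b) + edist (f b) (f c) + edist (f c) (f a) ≤ eVariationOn f (Icc s t) := by
  wlog hab : a ≤ b generalizing a b c
  · calc _ = edist (f b) (f a) + edist (f a) (f c) + edist (f c) (f b) := by
          rw [edist_comm (f a), edist_comm (f b) (f c), edist_comm (f c) (f a)]; ac_rfl
      _ ≤ _ := this hb ha hc (le_of_not_ge hab)
  wlog hbc : b ≤ c generalizing a b c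
  · rcases le_total a c with hac | hca
    · calc _ = edist (f a) (f c) + edist (f c) (f b) + edist (f b) (f a) := by
            rw [edist_comm (f a), edist_comm (f b) (f c), edist_comm (f c) (f a)]; ac_rfl
        _ ≤ _ := this ha hc hb hac (le_of_not_ge hbc)
    · calc _ = edist (f c) (f a) + edist (f a) (f b) + edist (f b) (f c) := by ac_rfl
        _ ≤ _ := this hc ha hb hca hab
  exact edist_add_edist_add_edist_le_eVariationOn_of_le hf ha.1 hab hbc hc.2

end BoundedVariation

theorem stmt_13_general (A B C HA HB HC : EuclideanSpace ℝ (Fin 2)) (y : ℝ)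
    (hacuteA : ∠ B A C < π / 2)
    (hacuteB : ∠ A B C < π / 2)
    (hacuteC : ∠ A C B < π / 2)
    -- `HA`, `HB`, `HC` are the feet of the altitudes from `A`, `B`, `C`
    (hHAmem : HA ∈ affineSpan ℝ ({B, C} : Set (EuclideanSpace ℝ (Fin 2))))
    (hHAperp : inner ℝ (A - HA) (B - C) = (0 : ℝ))
    (hHBmem : HB ∈ affineSpan ℝ ({C, A} : Set (EuclideanSpace ℝ (Fin 2))))
    (hHBperp : inner ℝ (B - HB) (C - A) = (0 : ℝ))
    (hHCmem : HC ∈ affineSpan ℝ ({A, B} : Set (EuclideanSpace ℝ (Fin 2))))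
    (hHCperp : inner ℝ (C - HC) (A - B) = (0 : ℝ))
    (hy : y = dist HA HB + dist HB HC + dist HC HA)
    (γ : ℝ → EuclideanSpace ℝ (Fin 2))
    (hclosed : γ 0 = γ 1)
    (hBC : ((γ '' Icc 0 1) ∩
      (affineSpan ℝ ({B, C} : Set (EuclideanSpace ℝ (Fin 2))) :
        Set (EuclideanSpace ℝ (Fin 2)))).Nonempty)
    (hCA : ((γ '' Icc 0 1) ∩
      (affineSpan ℝ ({C, A} : Set (EuclideanSpace ℝ (Fin 2))) :
        Set (EuclideanSpace ℝ (Fin 2)))).Nonempty)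
    (hAB : ((γ '' Icc 0 1) ∩
      (affineSpan ℝ ({A, B} : Set (EuclideanSpace ℝ (Fin 2))) :
        Set (EuclideanSpace ℝ (Fin 2)))).Nonempty) :
    ENNReal.ofReal y ≤ eVariationOn γ (Icc 0 1) := by
  have hA := InnerProductGeometry.inner_pos_of_angle_lt_pi_div_two_s13 hacuteA
  have hB := real_inner_comm (A - B) (C - B) ▸
    InnerProductGeometry.inner_pos_of_angle_lt_pi_div_two_s13 hacuteB
  have hC := InnerProductGeometry.inner_pos_of_angle_lt_pi_div_two_s13 hacuteC
  have hHA : IsAltitudeFoot A B C HA := ⟨hHAmem, hHAperp⟩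
  have hHB : IsAltitudeFoot B C A HB := ⟨hHBmem, hHBperp⟩
  have hHC : IsAltitudeFoot C A B HC := ⟨hHCmem, hHCperp⟩
  obtain ⟨_, ⟨s₁, hs₁, rfl⟩, hP⟩ := hBC
  obtain ⟨_, ⟨s₂, hs₂, rfl⟩, hQ⟩ := hCA
  obtain ⟨_, ⟨s₃, hs₃, rfl⟩, hR⟩ := hAB
  have hpedal := dist_add_dist_add_dist_le_of_reflectsOff hHAmem hHBmem hHCmem hP hQ hR
    (reflectsOff_altitudeFoot hB hC hHA hHB hHC) (reflectsOff_altitudeFoot hC hA hHB hHC hHA)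
    (reflectsOff_altitudeFoot hA hB hHC hHA hHB)
  calc ENNReal.ofReal y
      ≤ ENNReal.ofReal (dist (γ s₁) (γ s₂) + dist (γ s₂) (γ s₃) + dist (γ s₃) (γ s₁)) :=
        ENNReal.ofReal_le_ofReal (hy ▸ hpedal)
    _ = edist (γ s₁) (γ s₂) + edist (γ s₂) (γ s₃) + edist (γ s₃) (γ s₁) := by
        rw [edist_dist, edist_dist, edist_dist, ← ENNReal.ofReal_add, ← ENNReal.ofReal_add] <;>
          positivity
    _ ≤ eVariationOn γ (Icc 0 1) := edist_add_edist_add_edist_le_eVariationOn hclosed hs₁ hs₂ hs₃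

/-- Fagnano-type lower bound: for an acute triangle, every closed rectifiable curve
visiting the three side lines has length at least the perimeter `y` of the orthic
(pedal) triangle. -/
theorem stmt_13 (A B C HA HB HC : EuclideanSpace ℝ (Fin 2)) (y : ℝ)
    (hind : AffineIndependent ℝ ![A, B, C])
    (hacuteA : ∠ B A C < π / 2)
    (hacuteB : ∠ A B C < π / 2)
    (hacuteC : ∠ A C B < π / 2)
    -- `HA`, `HB`, `HC` are the feet of the altitudes from `A`, `B`, `C`
    (hHAmem : HA ∈ affineSpan ℝ ({B, C} : Set (EuclideanSpace ℝ (Fin 2))))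
    (hHAperp : inner ℝ (A - HA) (B - C) = (0 : ℝ))
    (hHBmem : HB ∈ affineSpan ℝ ({C, A} : Set (EuclideanSpace ℝ (Fin 2))))
    (hHBperp : inner ℝ (B - HB) (C - A) = (0 : ℝ))
    (hHCmem : HC ∈ affineSpan ℝ ({A, B} : Set (EuclideanSpace ℝ (Fin 2))))
    (hHCperp : inner ℝ (C - HC) (A - B) = (0 : ℝ))
    (hy : y = dist HA HB + dist HB HC + dist HC HA)
    (γ : ℝ → EuclideanSpace ℝ (Fin 2))
    (hcont : ContinuousOn γ (Icc 0 1))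
    (hclosed : γ 0 = γ 1)
    (hBC : ((γ '' Icc 0 1) ∩
      (affineSpan ℝ ({B, C} : Set (EuclideanSpace ℝ (Fin 2))) :
        Set (EuclideanSpace ℝ (Fin 2)))).Nonempty)
    (hCA : ((γ '' Icc 0 1) ∩
      (affineSpan ℝ ({C, A} : Set (EuclideanSpace ℝ (Fin 2))) :
        Set (EuclideanSpace ℝ (Fin 2)))).Nonempty)
    (hAB : ((γ '' Icc 0 1) ∩
      (affineSpan ℝ ({A, B} : Set (EuclideanSpace ℝ (Fin 2))) :
        Set (EuclideanSpace ℝ (Fin 2)))).Nonempty) :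
    ENNReal.ofReal y ≤ eVariationOn γ (Icc 0 1) :=
  stmt_13_general A B C HA HB HC y hacuteA hacuteB hacuteC hHAmem hHAperp hHBmem hHBperp hHCmem
    hHCperp hy γ hclosed hBC hCA hAB
end

section
/- Let L be a finite nonempty set of lines (one-dimensional affine subspaces) in ℝ², and let γ be a closed rectifiable curve of length ℓ whose image intersects every line in L. Then there exists a point p ∈ ℝ² such that dist(p, l) ≤ ℓ/4 for every line l ∈ L; equivalently, there is a circle of radius at most ℓ/4, hence of circumference at most (π/2)·ℓ, intersecting every line of L. -/
open Set Metric MeasureTheory Real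

/-- Core of Theorem 5.2: if a closed rectifiable curve of length `ℓ` visits every line
in a finite nonempty family `L` of lines, then there is a point within distance `ℓ/4`
of every line of `L` (hence a circle of radius at most `ℓ/4`, of circumference at most
`(π/2)·ℓ`, touching all lines of `L`). -/
theorem stmt_14 (L : Finset (AffineSubspace ℝ (EuclideanSpace ℝ (Fin 2))))
    (hne : L.Nonempty)
    (hdim : ∀ l ∈ L, Module.finrank ℝ l.direction = 1)
    (γ : ℝ → EuclideanSpace ℝ (Fin 2)) (ℓ : ℝ)
    (hcont : ContinuousOn γ (Icc 0 1))
    (hclosed : γ 0 = γ 1)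
    (hrect : eVariationOn γ (Icc 0 1) ≠ ⊤)
    (hlen : (eVariationOn γ (Icc 0 1)).toReal = ℓ)
    (hvisit : ∀ l ∈ L, ((γ '' Icc 0 1) ∩ (l : Set (EuclideanSpace ℝ (Fin 2)))).Nonempty) :
    ∃ p : EuclideanSpace ℝ (Fin 2),
      ∀ l ∈ L, infDist p (l : Set (EuclideanSpace ℝ (Fin 2))) ≤ ℓ / 4 := by
  classical
  have h0 : (0 : ℝ) ∈ Icc (0:ℝ) 1 := by norm_num
  have h1 : (1 : ℝ) ∈ Icc (0:ℝ) 1 := by norm_num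
  have hbdd : BoundedVariationOn γ (Icc 0 1) := hrect
  have hloc : LocallyBoundedVariationOn γ (Icc 0 1) := hbdd.locallyBoundedVariationOn
  set v : ℝ → ℝ := variationOnFromTo γ (Icc 0 1) 0 with hv
  have hv0 : v 0 = 0 := variationOnFromTo.self γ _ 0
  have hv1 : v 1 = ℓ := by
    rw [hv, variationOnFromTo.eq_of_le γ _ (zero_le_one), Set.inter_self, hlen]
  have hℓ0 : 0 ≤ ℓ := by rw [← hlen]; exact ENNReal.toReal_nonneg
  have hvmono : MonotoneOn v (Icc 0 1) := variationOnFromTo.monotoneOn hloc h0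
  -- distance bound via variation
  have hdist : ∀ x ∈ Icc (0:ℝ) 1, ∀ y ∈ Icc (0:ℝ) 1, x ≤ y →
      dist (γ x) (γ y) ≤ v y - v x := by
    intro x hx y hy hxy
    have hadd : v x + variationOnFromTo γ (Icc 0 1) x y = v y :=
      variationOnFromTo.add hloc h0 hx hy
    have h1' : v y - v x = variationOnFromTo γ (Icc 0 1) x y := by linarith
    rw [h1', variationOnFromTo.eq_of_le γ _ hxy]
    have hxm : x ∈ Icc (0:ℝ) 1 ∩ Icc x y := ⟨hx, le_refl x, hxy⟩
    have hym : y ∈ Icc (0:ℝ) 1 ∩ Icc x y := ⟨hy, hxy, le_refl y⟩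
    have hed := eVariationOn.edist_le γ hxm hym
    have hne' : eVariationOn γ (Icc (0:ℝ) 1 ∩ Icc x y) ≠ ⊤ :=
      ne_top_of_le_ne_top hrect (eVariationOn.mono γ inter_subset_left)
    rw [dist_edist]
    exact ENNReal.toReal_mono hne' hed
  -- the "half-length" split point
  set S : Set ℝ := {t | t ∈ Icc (0:ℝ) 1 ∧ v t ≤ ℓ / 2} with hS
  have h0S : (0:ℝ) ∈ S := ⟨h0, by rw [hv0]; linarith⟩
  have hSne : S.Nonempty := ⟨0, h0S⟩
  have hSbdd : BddAbove S := ⟨1, fun t ht => ht.1.2⟩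
  set s : ℝ := sSup S with hs
  have hs0 : 0 ≤ s := le_csSup hSbdd h0S
  have hs1 : s ≤ 1 := csSup_le hSne fun t ht => ht.1.2
  have hsI : s ∈ Icc (0:ℝ) 1 := ⟨hs0, hs1⟩
  have hconts : ContinuousWithinAt γ (Icc 0 1) s := hcont s hsI
  -- Key claim: every point of the curve is within total "two-arm" distance ℓ/2
  have key : ∀ t ∈ Icc (0:ℝ) 1, dist (γ 0) (γ t) + dist (γ s) (γ t) ≤ ℓ / 2 := by
    intro t ht
    refine le_of_forall_pos_le_add ?_
    intro ε hε
    obtain ⟨δ, hδ, hδball⟩ := Metric.continuousWithinAt_iff.1 hconts ε hε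
    rcases lt_trichotomy t s with hts | hts | hts
    · -- t < s : pick u ∈ S with max t (s - δ) < u ≤ s
      have hlt : max t (s - δ) < s := by
        apply max_lt hts; linarith
      obtain ⟨u, huS, hu⟩ := exists_lt_of_lt_csSup hSne hlt
      have hus : u ≤ s := le_csSup hSbdd huS
      have htu : t ≤ u := le_of_lt (lt_of_le_of_lt (le_max_left _ _) hu)
      have hud : dist u s < δ := by
        rw [Real.dist_eq, abs_of_nonpos (by linarith)]
        have := lt_of_le_of_lt (le_max_right t (s - δ)) hu
        linarith
      have hgud : dist (γ u) (γ s) < ε := hδball huS.1 hud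
      have d1 : dist (γ 0) (γ t) ≤ v t - v 0 := hdist 0 h0 t ht (ht.1)
      have d2 : dist (γ t) (γ u) ≤ v u - v t := hdist t ht u huS.1 htu
      have d3 : dist (γ s) (γ t) ≤ dist (γ t) (γ u) + dist (γ u) (γ s) := by
        rw [dist_comm (γ s) (γ t)]
        exact dist_triangle _ _ _
      have : v u ≤ ℓ / 2 := huS.2
      have := hgud.le
      rw [hv0] at d1
      linarith
    · -- t = s : pick u ∈ S with s - δ < u ≤ s
      subst hts
      obtain ⟨u, huS, hu⟩ := exists_lt_of_lt_csSup hSne (by linarith : s - δ < s)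
      have hus : u ≤ s := le_csSup hSbdd huS
      have hud : dist u s < δ := by
        rw [Real.dist_eq, abs_of_nonpos (by linarith)]; linarith
      have hgud : dist (γ u) (γ s) < ε := hδball huS.1 hud
      have d1 : dist (γ 0) (γ u) ≤ v u - v 0 := hdist 0 h0 u huS.1 huS.1.1
      have d3 : dist (γ 0) (γ s) ≤ dist (γ 0) (γ u) + dist (γ u) (γ s) :=
        dist_triangle _ _ _
      have : v u ≤ ℓ / 2 := huS.2
      have := hgud.le
      rw [hv0] at d1
      simp only [dist_self]
      linarith
    · -- s < t : pick u with s < u < min t (s + δ); then v u > ℓ/2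
      set u : ℝ := (s + min t (s + δ)) / 2 with hu
      have hsu : s < u := by
        have : s < min t (s + δ) := lt_min hts (by linarith)
        rw [hu]; linarith
      have hut : u < t := by
        have h' : u < min t (s + δ) := by
          have : s < min t (s + δ) := lt_min hts (by linarith)
          rw [hu]; linarith
        exact lt_of_lt_of_le h' (min_le_left _ _)
      have huI : u ∈ Icc (0:ℝ) 1 := ⟨by linarith, le_trans hut.le ht.2⟩
      have hvu : ℓ / 2 < v u := by
        by_contra hcon
        push_neg at hcon
        have : u ≤ s := le_csSup hSbdd ⟨huI, hcon⟩
        linarith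
      have hud : dist u s < δ := by
        have h' : u < s + δ := lt_of_lt_of_le
          (by
            have : s < min t (s + δ) := lt_min hts (by linarith)
            rw [hu]; linarith)
          (min_le_right t (s + δ))
        rw [Real.dist_eq, abs_of_nonneg (by linarith)]
        linarith
      have hgud : dist (γ u) (γ s) < ε := hδball huI hud
      have d1 : dist (γ u) (γ t) ≤ v t - v u := hdist u huI t ht hut.le
      have d2 : dist (γ t) (γ 1) ≤ v 1 - v t := hdist t ht 1 h1 ht.2
      have d3 : dist (γ s) (γ t) ≤ dist (γ s) (γ u) + dist (γ u) (γ t) :=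
        dist_triangle _ _ _
      have d4 : dist (γ 0) (γ t) = dist (γ t) (γ 1) := by
        rw [hclosed, dist_comm]
      have := hgud.le
      rw [dist_comm (γ u) (γ s)] at this
      rw [hv1] at d2
      linarith
  -- conclude with the midpoint
  refine ⟨midpoint ℝ (γ 0) (γ s), fun l hl => ?_⟩
  obtain ⟨x, ⟨t, ht, rfl⟩, hxl⟩ := hvisit l hl
  refine le_trans (infDist_le_dist_of_mem hxl) ?_
  have hmid : dist (midpoint ℝ (γ 0) (γ s)) (midpoint ℝ (γ t) (γ t)) ≤
      (dist (γ 0) (γ t) + dist (γ s) (γ t)) / 2 :=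
    dist_midpoint_midpoint_le _ _ _ _
  rw [midpoint_self] at hmid
  calc dist (midpoint ℝ (γ 0) (γ s)) (γ t)
      ≤ (dist (γ 0) (γ t) + dist (γ s) (γ t)) / 2 := hmid
    _ ≤ (ℓ / 2) / 2 := by
        have := key t ht
        linarith
    _ = ℓ / 4 := by ring
end

section
/- Let L be a finite nonempty set of lines (one-dimensional affine subspaces) in ℝ². Then there exists a subset S ⊆ L with at most 3 elements such that the infimum over points p ∈ ℝ² of the maximum over l ∈ S of dist(p, l) equals the infimum over p ∈ ℝ² of the maximum over l ∈ L of dist(p, l). -/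
open Set Metric Real

section Aux

variable {α : Type*} [MetricSpace α]

private lemma aux_bdd {ι : Type*} {S : Set ι} (hS : S.Finite) (g : ι → ℝ) :
    BddAbove (Set.range fun l => ⨆ _ : l ∈ S, g l) := by
  apply Set.Finite.bddAbove
  apply Set.Finite.subset ((hS.image g).insert 0)
  rintro x ⟨l, rfl⟩
  by_cases h : l ∈ S
  · refine Or.inr ⟨l, h, ?_⟩
    show g l = ⨆ _ : l ∈ S, g l
    exact (ciSup_pos (f := fun _ => g l) h).symm
  · left
    haveI : IsEmpty (l ∈ S) := ⟨h⟩
    simp [Real.iSup_of_isEmpty]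

private lemma aux_le_sup {ι : Type*} {S : Set ι} (hS : S.Finite) (g : ι → ℝ) {l : ι}
    (hl : l ∈ S) : g l ≤ ⨆ l ∈ S, g l := by
  have := le_ciSup (aux_bdd hS g) l
  rwa [ciSup_pos hl] at this

private lemma aux_sup_le {ι : Type*} {S : Set ι} (g : ι → ℝ) {z : ℝ} (hz : 0 ≤ z)
    (h : ∀ l ∈ S, g l ≤ z) : (⨆ l ∈ S, g l) ≤ z :=
  Real.iSup_le (fun l => Real.iSup_le (fun hl => h l hl) hz) hz

private lemma aux_sup_nonneg {ι : Type*} {S : Set ι} (g : ι → ℝ) (hg : ∀ l, 0 ≤ g l) :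
    0 ≤ ⨆ l ∈ S, g l :=
  Real.iSup_nonneg fun l => Real.iSup_nonneg fun _ => hg l

private lemma aux_sup_mono {ι : Type*} {S T : Set ι} (hT : T.Finite) (hST : S ⊆ T)
    (g : ι → ℝ) (hg : ∀ l, 0 ≤ g l) :
    (⨆ l ∈ S, g l) ≤ ⨆ l ∈ T, g l :=
  aux_sup_le g (aux_sup_nonneg g hg) fun l hl => aux_le_sup hT g (hST hl)

end Aux

/-- Observation 2: the minimum touching circle of a finite nonempty set of lines is
determined by at most 3 of the lines. -/
theorem stmt_15 (L : Set (AffineSubspace ℝ (EuclideanSpace ℝ (Fin 2))))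
    (hfin : L.Finite) (hne : L.Nonempty)
    (hdim : ∀ l ∈ L, Module.finrank ℝ l.direction = 1) :
    ∃ S ⊆ L, S.ncard ≤ 3 ∧
      (⨅ p : EuclideanSpace ℝ (Fin 2),
          ⨆ l ∈ S, infDist p (l : Set (EuclideanSpace ℝ (Fin 2)))) =
        ⨅ p : EuclideanSpace ℝ (Fin 2),
          ⨆ l ∈ L, infDist p (l : Set (EuclideanSpace ℝ (Fin 2))) := by
  classical
  set E := EuclideanSpace ℝ (Fin 2)
  -- every line in L is nonempty
  have hlne : ∀ l ∈ L, (l : Set E).Nonempty := by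
    intro l hl
    rw [AffineSubspace.nonempty_iff_ne_bot]
    intro hbot
    have := hdim l hl
    rw [hbot, AffineSubspace.direction_bot] at this
    simp at this
  -- notation
  set f : Set (AffineSubspace ℝ E) → E → ℝ :=
    fun S p => ⨆ l ∈ S, infDist p (l : Set E) with hf
  set g : Set (AffineSubspace ℝ E) → ℝ := fun S => ⨅ p : E, f S p with hg
  have hfnonneg : ∀ S p, 0 ≤ f S p := fun S p =>
    aux_sup_nonneg _ fun l => infDist_nonneg
  have hbddbelow : ∀ S, BddBelow (Set.range (f S)) := by
    intro S
    exact ⟨0, by rintro x ⟨p, rfl⟩; exact hfnonneg S p⟩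
  have hgnonneg : ∀ S, 0 ≤ g S := fun S => Real.iInf_nonneg (hfnonneg S)
  have hgmono : ∀ S, S ⊆ L → g S ≤ g L := by
    intro S hS
    exact ciInf_mono (hbddbelow S) fun p =>
      aux_sup_mono hfin hS _ (fun l => infDist_nonneg)
  -- choose S₀ maximizing g among subsets of L of cardinality ≤ 3
  have h𝒮fin : {S | S ⊆ L ∧ S.ncard ≤ 3}.Finite :=
    hfin.finite_subsets.subset fun S hS => hS.1
  obtain ⟨S₀, hS₀mem, hS₀max⟩ :=
    Set.exists_max_image _ g h𝒮fin ⟨∅, Set.empty_subset _, by simp⟩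
  refine ⟨S₀, hS₀mem.1, hS₀mem.2, ?_⟩
  refine le_antisymm (hgmono S₀ hS₀mem.1) ?_
  by_contra hlt0
  push_neg at hlt0
  have hlt : g S₀ < g L := hlt0
  set z : ℝ := (g S₀ + g L) / 2 with hz
  have hz0 : 0 ≤ z := by have := hgnonneg S₀; have := hgnonneg L; positivity
  have hzlt : g S₀ < z := by simp only [hz]; linarith
  have hzr : z < g L := by simp only [hz]; linarith
  -- apply Helly's theorem
  haveI : Fintype L := hfin.fintype
  have hrank : Module.finrank ℝ E = 2 := finrank_euclideanSpace_fin
  have hHelly := Convex.helly_theorem' (𝕜 := ℝ) (E := E)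
    (F := fun i : L => cthickening z (i.1 : Set E)) (s := Finset.univ)
    (fun i _ => i.1.convex.cthickening z) ?_
  · obtain ⟨p, hp⟩ := hHelly
    simp only [Set.mem_iInter] at hp
    have hple : ∀ l ∈ L, infDist p (l : Set E) ≤ z := by
      intro l hl
      have := hp ⟨l, hl⟩ (Finset.mem_univ _)
      rw [mem_cthickening_iff,
        ENNReal.le_ofReal_iff_toReal_le (infEdist_ne_top (hlne l hl)) hz0] at this
      exact this
    have h1 : g L ≤ f L p := ciInf_le (hbddbelow L) p
    have h2 : f L p ≤ z := aux_sup_le _ hz0 hple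
    linarith
  · -- intersection condition for ≤ 3 sets
    intro I _ hIcard
    rw [hrank] at hIcard
    set S' : Set (AffineSubspace ℝ E) := Subtype.val '' (I : Set L) with hS'
    have hS'sub : S' ⊆ L := by rintro l ⟨i, _, rfl⟩; exact i.2
    have hS'card : S'.ncard ≤ 3 := by
      have h1 : S'.ncard ≤ (I : Set L).ncard := Set.ncard_image_le I.finite_toSet
      have h2 : (I : Set L).ncard = I.card := Set.ncard_coe_finset I
      omega
    have hgS' : g S' < z := lt_of_le_of_lt (hS₀max S' ⟨hS'sub, hS'card⟩) hzlt
    -- get a point with f S' p < z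
    have : ∃ p : E, f S' p < z := by
      by_contra h
      push_neg at h
      exact absurd (le_ciInf h) (not_le.mpr hgS')
    obtain ⟨p, hp⟩ := this
    refine ⟨p, ?_⟩
    simp only [Set.mem_iInter]
    intro i hi
    have hmem : (i : AffineSubspace ℝ E) ∈ S' := ⟨i, hi, rfl⟩
    have hle : infDist p (i.1 : Set E) ≤ f S' p := by
      show infDist p (i.1 : Set E) ≤ ⨆ l ∈ S', infDist p (l : Set E)
      exact aux_le_sup (hfin.subset hS'sub) (fun l => infDist p (l : Set E)) hmem
    rw [mem_cthickening_iff,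
      ENNReal.le_ofReal_iff_toReal_le (infEdist_ne_top (hlne i.1 i.2)) hz0]
    show infDist p (i.1 : Set E) ≤ z
    linarith
end
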